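/- arXiv:math/0703768 — 8 statements merged into one kernel-verified Lean document; each statement's English description precedes it below -/
import Mathlib

section
/- For all x₁, x₂ ∈ [0, α] with 0 < α ≤ 1/2, the quantities ρ₁(x₁,x₂) = (1/α)·√(|x₁-x₂|² + α·|√(α-x₁) - √(α-x₂)|²) and ρ₂(x₁,x₂) = (1/α)·√(|x₁-x₂|² + |√(α²-x₁²) - √(α²-x₂²)|²) are equivalent: there is an absolute constant C > 0 (independent of α, x₁, x₂) with C⁻¹·ρ₂(x₁,x₂) ≤ ρ₁(x₁,x₂) ≤ C·ρ₂(x₁,x₂). -/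
open Real

lemma sq_le_imp (a b : ℝ) (ha : 0 ≤ a) (hb : 0 ≤ b) (h : a^2 ≤ b^2) : a ≤ b := by
  nlinarith

lemma claim1 (α x₁ x₂ s₁ s₂ u₁ u₂ : ℝ) (hα : 0 < α) (h1 : 0 ≤ x₁) (h12 : x₁ ≤ x₂)
    (h2 : x₂ ≤ α) (hs₁0 : 0 ≤ s₁) (hs₂0 : 0 ≤ s₂) (hu₁0 : 0 ≤ u₁) (hu₂0 : 0 ≤ u₂)
    (hs₁ : s₁^2 = α - x₁) (hs₂ : s₂^2 = α - x₂)
    (hu₁ : u₁^2 = α^2 - x₁^2) (hu₂ : u₂^2 = α^2 - x₂^2) :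
    (u₁ - u₂)^2 ≤ 4 * ((x₁ - x₂)^2 + α * (s₁ - s₂)^2) := by
  have hyy : 0 ≤ (α - x₁) * (α - x₂) := mul_nonneg (by linarith) (by linarith)
  have hprod_lo : α * (s₁ * s₂) ≤ u₁ * u₂ := by
    apply sq_le_imp _ _ (by positivity) (by positivity)
    have e : (u₁*u₂)^2 - (α*(s₁*s₂))^2 = ((α+x₁)*(α+x₂) - α^2) * ((α-x₁)*(α-x₂)) := by
      rw [mul_pow, mul_pow, mul_pow, hu₁, hu₂, hs₁, hs₂]; ring
    linarith only [e, mul_nonneg (by nlinarith : (0:ℝ) ≤ (α+x₁)*(α+x₂) - α^2) hyy]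
  have hsum_u : α * (s₁ + s₂)^2 ≤ (u₁ + u₂)^2 := by
    have a1 : α * s₁^2 = α * (α - x₁) := by rw [hs₁]
    have a2 : α * s₂^2 = α * (α - x₂) := by rw [hs₂]
    have b1 : x₁ * α ≤ x₁^2 + α^2 := by nlinarith [sq_nonneg (α - x₁)]
    linarith only [hprod_lo, hu₁, hu₂, a1, a2, mul_nonneg h1 (by linarith : (0:ℝ) ≤ α - x₁),
      mul_nonneg (le_trans h1 h12) (by linarith : (0:ℝ) ≤ α - x₂)]
  have e1 : (u₁ - u₂)^2 * (u₁ + u₂)^2 = (x₂^2 - x₁^2)^2 := by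
    linear_combination (u₁^2 - u₂^2 + x₂^2 - x₁^2) * (hu₁ - hu₂)
  have e2 : (s₁ - s₂)^2 * (s₁ + s₂)^2 = (x₂ - x₁)^2 := by
    linear_combination (s₁^2 - s₂^2 + x₂ - x₁) * (hs₁ - hs₂)
  rcases eq_or_lt_of_le (by positivity : (0:ℝ) ≤ u₁ + u₂) with h0 | h0
  · have hu1z : u₁ = 0 := by linarith
    have hu2z : u₂ = 0 := by linarith
    rw [hu1z, hu2z]; norm_num; positivity
  · rcases eq_or_lt_of_le (by positivity : (0:ℝ) ≤ s₁ + s₂) with h0s | h0s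
    · -- s₁ = s₂ = 0 ⇒ x₁ = x₂ = α ⇒ u₁ = u₂
      have hs1z : s₁ = 0 := by linarith
      have hs2z : s₂ = 0 := by linarith
      have hx1 : x₁ = α := by
        have h := hs₁; rw [hs1z] at h; norm_num at h; linarith
      have hx2 : x₂ = α := by
        have h := hs₂; rw [hs2z] at h; norm_num at h; linarith
      have hsq : u₁^2 = u₂^2 := by rw [hu₁, hu₂, hx1, hx2]
      have : u₁ = u₂ :=
        le_antisymm (sq_le_imp _ _ hu₁0 hu₂0 (le_of_eq hsq))
          (sq_le_imp _ _ hu₂0 hu₁0 (le_of_eq hsq.symm))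
      rw [this]; norm_num; positivity
    · have key1 : (u₁ - u₂)^2 * ((u₁ + u₂)^2 * (s₁ + s₂)^2)
          ≤ (4 * ((x₁ - x₂)^2 + α * (s₁ - s₂)^2)) * ((u₁ + u₂)^2 * (s₁ + s₂)^2) := by
        have st1 : (u₁ - u₂)^2 * ((u₁ + u₂)^2 * (s₁ + s₂)^2)
            = (x₁ - x₂)^2 * (x₁ + x₂)^2 * (s₁ + s₂)^2 := by
          linear_combination (s₁ + s₂)^2 * e1
        have st2 : 4 * (α * (s₁ - s₂)^2) * ((u₁ + u₂)^2 * (s₁ + s₂)^2)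
            = 4 * α * (x₁ - x₂)^2 * (u₁ + u₂)^2 := by
          linear_combination 4 * α * (u₁ + u₂)^2 * e2
        have st3 : 4 * α * (x₁ - x₂)^2 * (α * (s₁ + s₂)^2)
            ≤ 4 * α * (x₁ - x₂)^2 * (u₁ + u₂)^2 :=
          mul_le_mul_of_nonneg_left hsum_u (by positivity)
        have st4 : (x₁ - x₂)^2 * (x₁ + x₂)^2 * (s₁ + s₂)^2
            ≤ (x₁ - x₂)^2 * (4 * α^2) * (s₁ + s₂)^2 := by
          have hxa : (x₁ + x₂)^2 ≤ 4 * α^2 := by nlinarith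
          exact mul_le_mul_of_nonneg_right
            (mul_le_mul_of_nonneg_left hxa (sq_nonneg (x₁ - x₂))) (sq_nonneg (s₁ + s₂))
        have h5 : 0 ≤ 4 * (x₁ - x₂)^2 * ((u₁ + u₂)^2 * (s₁ + s₂)^2) := by positivity
        linarith only [st1, st2, st3, st4, h5]
      have hpos : 0 < (u₁ + u₂)^2 * (s₁ + s₂)^2 := by positivity
      exact le_of_mul_le_mul_right key1 hpos

lemma claim2 (α x₁ x₂ s₁ s₂ u₁ u₂ : ℝ) (hα : 0 < α) (h1 : 0 ≤ x₁) (h12 : x₁ ≤ x₂)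
    (h2 : x₂ ≤ α) (hs₁0 : 0 ≤ s₁) (hs₂0 : 0 ≤ s₂) (hu₁0 : 0 ≤ u₁) (hu₂0 : 0 ≤ u₂)
    (hs₁ : s₁^2 = α - x₁) (hs₂ : s₂^2 = α - x₂)
    (hu₁ : u₁^2 = α^2 - x₁^2) (hu₂ : u₂^2 = α^2 - x₂^2) :
    α * (s₁ - s₂)^2 ≤ 2 * ((x₁ - x₂)^2 + (u₁ - u₂)^2) := by
  have hyy : 0 ≤ (α - x₁) * (α - x₂) := mul_nonneg (by linarith) (by linarith)
  have e1 : (u₁ - u₂)^2 * (u₁ + u₂)^2 = (x₂^2 - x₁^2)^2 := by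
    linear_combination (u₁^2 - u₂^2 + x₂^2 - x₁^2) * (hu₁ - hu₂)
  have e2 : (s₁ - s₂)^2 * (s₁ + s₂)^2 = (x₂ - x₁)^2 := by
    linear_combination (s₁^2 - s₂^2 + x₂ - x₁) * (hs₁ - hs₂)
  rcases le_or_gt x₁ (α/2) with hc | hc
  · -- α ≤ 2(α - x₁) = 2 s₁² ≤ 2 (s₁+s₂)², hence α(s₁-s₂)² ≤ 2(x₁-x₂)²
    have h5 : α ≤ 2 * (s₁ + s₂)^2 := by nlinarith [mul_nonneg hs₁0 hs₂0, sq_nonneg s₂]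
    have := mul_le_mul_of_nonneg_right h5 (sq_nonneg (s₁ - s₂))
    nlinarith [sq_nonneg (u₁ - u₂), e2]
  · -- x₁ + x₂ > α
    have hprod_hi : u₁ * u₂ ≤ 2 * α * (s₁ * s₂) := by
      apply sq_le_imp _ _ (by positivity) (by positivity)
      have e : (2*α*(s₁*s₂))^2 - (u₁*u₂)^2 = (4*α^2 - (α+x₁)*(α+x₂)) * ((α-x₁)*(α-x₂)) := by
        rw [mul_pow, mul_pow, mul_pow, mul_pow, hu₁, hu₂, hs₁, hs₂]; ring
      linarith only [e, mul_nonneg (by nlinarith : (0:ℝ) ≤ 4*α^2 - (α+x₁)*(α+x₂)) hyy]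
    have hsum_u : (u₁ + u₂)^2 ≤ 2 * α * (s₁ + s₂)^2 := by
      have a1 : α * s₁^2 = α * (α - x₁) := by rw [hs₁]
      have a2 : α * s₂^2 = α * (α - x₂) := by rw [hs₂]
      linarith only [hprod_hi, hu₁, hu₂, a1, a2, sq_nonneg (α - x₁), sq_nonneg (α - x₂)]
    rcases eq_or_lt_of_le (by positivity : (0:ℝ) ≤ u₁ + u₂) with h0 | h0
    · have hu1z : u₁ = 0 := by linarith
      have hu2z : u₂ = 0 := by linarith
      have hx1 : x₁ = α := by
        have h := hu₁; rw [hu1z] at h; norm_num at h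
        have h' : (α - x₁) * (α + x₁) = 0 := by linear_combination -h
        rcases mul_eq_zero.mp h' with h'' | h'' <;> linarith
      have hx2 : x₂ = α := by
        have h := hu₂; rw [hu2z] at h; norm_num at h
        have h' : (α - x₂) * (α + x₂) = 0 := by linear_combination -h
        rcases mul_eq_zero.mp h' with h'' | h'' <;> linarith
      have hs1z : s₁ = 0 := by
        have h := hs₁; rw [hx1] at h; norm_num at h
        exact h
      have hs2z : s₂ = 0 := by
        have h := hs₂; rw [hx2] at h; norm_num at h
        exact h
      rw [hs1z, hs2z]; norm_num; positivity
    · have key2 : (α * (s₁ - s₂)^2) * (u₁ + u₂)^2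
          ≤ (2 * ((x₁ - x₂)^2 + (u₁ - u₂)^2)) * (u₁ + u₂)^2 := by
        -- α(s₁-s₂)²(u₁+u₂)² ≤ α(s₁-s₂)²·2α(s₁+s₂)² = 2α²(x₂-x₁)²
        --   ≤ 2(x₁+x₂)²(x₂-x₁)² = 2(u₁-u₂)²(u₁+u₂)²
        have st1 : (α * (s₁ - s₂)^2) * (u₁ + u₂)^2
            ≤ (α * (s₁ - s₂)^2) * (2 * α * (s₁ + s₂)^2) :=
          mul_le_mul_of_nonneg_left hsum_u (by positivity)
        have st2 : (α * (s₁ - s₂)^2) * (2 * α * (s₁ + s₂)^2) = 2 * α^2 * (x₂ - x₁)^2 := by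
          linear_combination 2 * α^2 * e2
        have st3 : 2 * α^2 * (x₂ - x₁)^2 ≤ 2 * (x₁ + x₂)^2 * (x₂ - x₁)^2 := by
          have hax : α^2 ≤ (x₁ + x₂)^2 := pow_le_pow_left₀ hα.le (by linarith) 2
          linarith only [mul_le_mul_of_nonneg_right hax (sq_nonneg (x₂ - x₁))]
        have st4 : 2 * (x₁ + x₂)^2 * (x₂ - x₁)^2 = 2 * (u₁ - u₂)^2 * (u₁ + u₂)^2 := by
          linear_combination -2 * e1
        have h5 : 0 ≤ 2 * (x₁ - x₂)^2 * (u₁ + u₂)^2 := by positivity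
        linarith only [st1, st2, st3, st4, h5]
      exact le_of_mul_le_mul_right key2 (by positivity)


lemma both_claims (α x₁ x₂ : ℝ) (hα : 0 < α) (h1 : 0 ≤ x₁) (h1' : x₁ ≤ α)
    (h2 : 0 ≤ x₂) (h2' : x₂ ≤ α) :
    (Real.sqrt (α^2 - x₁^2) - Real.sqrt (α^2 - x₂^2))^2
      ≤ 4 * ((x₁ - x₂)^2 + α * (Real.sqrt (α - x₁) - Real.sqrt (α - x₂))^2) ∧
    α * (Real.sqrt (α - x₁) - Real.sqrt (α - x₂))^2
      ≤ 2 * ((x₁ - x₂)^2 + (Real.sqrt (α^2 - x₁^2) - Real.sqrt (α^2 - x₂^2))^2) := by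
  have hs₁ : (Real.sqrt (α - x₁))^2 = α - x₁ := Real.sq_sqrt (by linarith)
  have hs₂ : (Real.sqrt (α - x₂))^2 = α - x₂ := Real.sq_sqrt (by linarith)
  have hu₁ : (Real.sqrt (α^2 - x₁^2))^2 = α^2 - x₁^2 := Real.sq_sqrt (by nlinarith)
  have hu₂ : (Real.sqrt (α^2 - x₂^2))^2 = α^2 - x₂^2 := Real.sq_sqrt (by nlinarith)
  rcases le_total x₁ x₂ with h12 | h12
  · exact ⟨claim1 α x₁ x₂ _ _ _ _ hα h1 h12 h2' (Real.sqrt_nonneg _) (Real.sqrt_nonneg _)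
      (Real.sqrt_nonneg _) (Real.sqrt_nonneg _) hs₁ hs₂ hu₁ hu₂,
     claim2 α x₁ x₂ _ _ _ _ hα h1 h12 h2' (Real.sqrt_nonneg _) (Real.sqrt_nonneg _)
      (Real.sqrt_nonneg _) (Real.sqrt_nonneg _) hs₁ hs₂ hu₁ hu₂⟩
  · have c1 := claim1 α x₂ x₁ _ _ _ _ hα h2 h12 h1' (Real.sqrt_nonneg _) (Real.sqrt_nonneg _)
      (Real.sqrt_nonneg _) (Real.sqrt_nonneg _) hs₂ hs₁ hu₂ hu₁
    have c2 := claim2 α x₂ x₁ _ _ _ _ hα h2 h12 h1' (Real.sqrt_nonneg _) (Real.sqrt_nonneg _)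
      (Real.sqrt_nonneg _) (Real.sqrt_nonneg _) hs₂ hs₁ hu₂ hu₁
    constructor <;> nlinarith [c1, c2]

/-- Equivalence of the two boundary-adapted metrics ρ₁ and ρ₂ on [0,α] ⊂ [-α,α],
for 0 < α ≤ 1/2, with an absolute constant independent of α, x₁, x₂. -/
theorem stmt_0 :
    ∃ C : ℝ, 0 < C ∧ ∀ (α x₁ x₂ : ℝ), 0 < α → α ≤ 1/2 →
      x₁ ∈ Set.Icc (0:ℝ) α → x₂ ∈ Set.Icc (0:ℝ) α →
      C⁻¹ * ((1/α) * Real.sqrt (|x₁ - x₂|^2 +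
          |Real.sqrt (α^2 - x₁^2) - Real.sqrt (α^2 - x₂^2)|^2))
        ≤ (1/α) * Real.sqrt (|x₁ - x₂|^2 +
          α * |Real.sqrt (α - x₁) - Real.sqrt (α - x₂)|^2) ∧
      (1/α) * Real.sqrt (|x₁ - x₂|^2 +
          α * |Real.sqrt (α - x₁) - Real.sqrt (α - x₂)|^2)
        ≤ C * ((1/α) * Real.sqrt (|x₁ - x₂|^2 +
          |Real.sqrt (α^2 - x₁^2) - Real.sqrt (α^2 - x₂^2)|^2)) := by
  refine ⟨3, by norm_num, fun α x₁ x₂ hα _ hm1 hm2 => ?_⟩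
  obtain ⟨h1, h1'⟩ := hm1
  obtain ⟨h2, h2'⟩ := hm2
  obtain ⟨hB, hA⟩ := both_claims α x₁ x₂ hα h1 h1' h2 h2'
  simp only [sq_abs]
  set D := (x₁ - x₂)^2 with hD
  set A := α * (Real.sqrt (α - x₁) - Real.sqrt (α - x₂))^2 with hAdef
  set B := (Real.sqrt (α^2 - x₁^2) - Real.sqrt (α^2 - x₂^2))^2 with hBdef
  have hD0 : 0 ≤ D := sq_nonneg _
  have hA0 : 0 ≤ A := mul_nonneg hα.le (sq_nonneg _)
  have hB0 : 0 ≤ B := sq_nonneg _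
  have sqrt9 : ∀ t : ℝ, 0 ≤ t → Real.sqrt (9 * t) = 3 * Real.sqrt t := by
    intro t ht
    rw [show (9:ℝ) * t = 3^2 * t by ring, Real.sqrt_mul (by positivity),
      Real.sqrt_sq (by norm_num)]
  have hinv : (0:ℝ) ≤ 1/α := by positivity
  constructor
  · have key : Real.sqrt (D + B) ≤ 3 * Real.sqrt (D + A) := by
      rw [← sqrt9 (D + A) (by linarith)]
      exact Real.sqrt_le_sqrt (by linarith)
    have := mul_le_mul_of_nonneg_left key hinv
    linarith
  · have key : Real.sqrt (D + A) ≤ 3 * Real.sqrt (D + B) := by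
      rw [← sqrt9 (D + B) (by linarith)]
      exact Real.sqrt_le_sqrt (by linarith)
    have := mul_le_mul_of_nonneg_left key hinv
    linarith
end

section
/- Let α ∈ (0, 1/2] and define ρ₂(x₁,x₂) = (1/α)·√(|x₁-x₂|² + |√(α²-x₁²) - √(α²-x₂²)|²) on [-α,α], and for t₁, t₂ ∈ [0,π] let x_i = arcsin((sin α)·cos t_i) and ρ₃(x₁,x₂) = |t₁ - t₂|. Then there is an absolute constant C > 0, independent of α, t₁, t₂, such that C⁻¹·|t₁-t₂| ≤ ρ₂(x₁,x₂) ≤ C·|t₁-t₂|. -/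
/-!
Put `s = sin α`, `u = s cos t`, `v = s sin t`: the point `(u, v)` runs over a half circle of
radius `s`, and its chord length is `2 s |sin ((t₁ - t₂) / 2)|`, comparable to `α |t₁ - t₂|`.
The point `(x, y) = (arcsin u, √(α² - x²))` lies on the half circle of radius `α = arcsin s`, and
the map `(u, v) ↦ (x, y)` is bi-Lipschitz with absolute constants: `arcsin` has slope in `[1, 2]`
on `[-1/2, 1/2]`, hence `x₁² - x₂²` is comparable to `u₁² - u₂²` and `y` to `v`; since
`|y₁ - y₂| (y₁ + y₂) = |x₁² - x₂²|` and `|v₁ - v₂| (v₁ + v₂) = |u₁² - u₂²|`, also `|y₁ - y₂|` is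
comparable to `|v₁ - v₂|`.
-/

open Real Set

lemma abs_sub_le_abs_arcsin_sub {a b : ℝ} (ha : |a| ≤ 1) (hb : |b| ≤ 1) :
    |a - b| ≤ |arcsin a - arcsin b| := by
  simpa only [sin_arcsin' (abs_le.mp ha), sin_arcsin' (abs_le.mp hb)] using
    abs_sin_sub_sin_le (arcsin a) (arcsin b)

lemma abs_arcsin_sub_le {a b : ℝ} (ha : |a| ≤ 1 / 2) (hb : |b| ≤ 1 / 2) :
    |arcsin a - arcsin b| ≤ 2 * |a - b| := by
  have hderiv : ∀ x ∈ Icc (-(1 / 2) : ℝ) (1 / 2),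
      HasDerivWithinAt arcsin (1 / √(1 - x ^ 2)) (Icc (-(1 / 2)) (1 / 2)) x := fun x hx =>
    (hasDerivAt_arcsin (by linarith [hx.1]) (by linarith [hx.2])).hasDerivWithinAt
  have hbound : ∀ x ∈ Icc (-(1 / 2) : ℝ) (1 / 2), ‖1 / √(1 - x ^ 2)‖ ≤ 2 := by
    intro x hx
    have hsqrt : 1 / 2 ≤ √(1 - x ^ 2) := le_sqrt_of_sq_le (by nlinarith [hx.1, hx.2])
    rw [norm_of_nonneg (by positivity), div_le_iff₀ (by linarith)]
    linarith
  simpa only [Real.norm_eq_abs] using (convex_Icc _ _).norm_image_sub_le_of_norm_hasDerivWithin_le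
    hderiv hbound (abs_le.mp hb) (abs_le.mp ha)

lemma abs_arcsin_le_arcsin {u s : ℝ} (hu : |u| ≤ s) : |arcsin u| ≤ arcsin s := by
  rw [abs_le, ← arcsin_neg]
  exact ⟨arcsin_le_arcsin ((neg_le_neg hu).trans (neg_abs_le u)),
    arcsin_le_arcsin ((le_abs_self u).trans hu)⟩

lemma abs_sq_sub_sq_le_abs_arcsin_sq_sub_sq {a b : ℝ} (ha : |a| ≤ 1) (hb : |b| ≤ 1) :
    |a ^ 2 - b ^ 2| ≤ |arcsin a ^ 2 - arcsin b ^ 2| := by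
  have hsum := abs_sub_le_abs_arcsin_sub ha (abs_neg b ▸ hb)
  rw [arcsin_neg, sub_neg_eq_add, sub_neg_eq_add] at hsum
  rw [sq_sub_sq, sq_sub_sq, abs_mul, abs_mul]
  exact mul_le_mul hsum (abs_sub_le_abs_arcsin_sub ha hb) (abs_nonneg _) (abs_nonneg _)

lemma abs_arcsin_sq_sub_sq_le {a b : ℝ} (ha : |a| ≤ 1 / 2) (hb : |b| ≤ 1 / 2) :
    |arcsin a ^ 2 - arcsin b ^ 2| ≤ 4 * |a ^ 2 - b ^ 2| := by
  have hsum := abs_arcsin_sub_le ha (abs_neg b ▸ hb)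
  rw [arcsin_neg, sub_neg_eq_add, sub_neg_eq_add] at hsum
  rw [sq_sub_sq, sq_sub_sq, abs_mul, abs_mul]
  calc |arcsin a + arcsin b| * |arcsin a - arcsin b|
      ≤ (2 * |a + b|) * (2 * |a - b|) :=
        mul_le_mul hsum (abs_arcsin_sub_le ha hb) (abs_nonneg _) (by positivity)
    _ = 4 * (|a + b| * |a - b|) := by ring

lemma abs_sub_le_of_abs_sq_sub_sq_le {p₁ p₂ q₁ q₂ c k : ℝ} (hp₁ : 0 ≤ p₁) (hp₂ : 0 ≤ p₂)
    (hq₁ : 0 ≤ q₁) (hq₂ : 0 ≤ q₂) (hc : 0 ≤ c) (hsq : |p₁ ^ 2 - p₂ ^ 2| ≤ c * |q₁ ^ 2 - q₂ ^ 2|)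
    (hsum : q₁ + q₂ ≤ k * (p₁ + p₂)) : |p₁ - p₂| ≤ c * k * |q₁ - q₂| := by
  rw [sq_sub_sq, sq_sub_sq, abs_mul, abs_mul, abs_of_nonneg (add_nonneg hp₁ hp₂),
    abs_of_nonneg (add_nonneg hq₁ hq₂)] at hsq
  rcases (add_nonneg hp₁ hp₂).eq_or_lt with hp | hp
  · have hq : q₁ + q₂ ≤ 0 := by simpa [← hp] using hsum
    rw [show p₁ = 0 by linarith, show p₂ = 0 by linarith, show q₁ = 0 by linarith,
      show q₂ = 0 by linarith]
    simp
  · refine le_of_mul_le_mul_left ?_ hp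
    calc (p₁ + p₂) * |p₁ - p₂| ≤ c * ((q₁ + q₂) * |q₁ - q₂|) := hsq
      _ ≤ c * (k * (p₁ + p₂) * |q₁ - q₂|) := by gcongr
      _ = (p₁ + p₂) * (c * k * |q₁ - q₂|) := by ring

lemma sqrt_sq_add_sq_le {a b c d k : ℝ} (hk : 0 ≤ k) (hac : |a| ≤ k * |c|) (hbd : |b| ≤ k * |d|) :
    √(|a| ^ 2 + |b| ^ 2) ≤ k * √(|c| ^ 2 + |d| ^ 2) := by
  rw [sqrt_le_left (by positivity), mul_pow, sq_sqrt (by positivity)]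
  have := pow_le_pow_left₀ (abs_nonneg a) hac 2
  have := pow_le_pow_left₀ (abs_nonneg b) hbd 2
  nlinarith

noncomputable def semicircleHeight (r x : ℝ) : ℝ := √(r ^ 2 - x ^ 2)

noncomputable def rho2 (α x₁ x₂ : ℝ) : ℝ :=
  (1 / α) * √(|x₁ - x₂| ^ 2 + |semicircleHeight α x₁ - semicircleHeight α x₂| ^ 2)

section SemicircleHeight

local notation "H" => semicircleHeight

variable {r s u u₁ u₂ : ℝ}

lemma semicircleHeight_nonneg (r x : ℝ) : 0 ≤ H r x := sqrt_nonneg _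

lemma sq_semicircleHeight (hu : |u| ≤ r) : H r u ^ 2 = r ^ 2 - u ^ 2 :=
  sq_sqrt (sub_nonneg.2 (sq_le_sq.2 (hu.trans (le_abs_self r))))

lemma abs_semicircleHeight_sq_sub_sq (hu₁ : |u₁| ≤ r) (hu₂ : |u₂| ≤ r) :
    |H r u₁ ^ 2 - H r u₂ ^ 2| = |u₁ ^ 2 - u₂ ^ 2| := by
  rw [sq_semicircleHeight hu₁, sq_semicircleHeight hu₂, abs_sub_comm]
  ring_nf

lemma semicircleHeight_le_semicircleHeight_arcsin (hs : s ≤ 1) (hu : |u| ≤ s) :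
    H s u ≤ H (arcsin s) (arcsin u) := by
  have hs' : |s| ≤ 1 := (abs_of_nonneg ((abs_nonneg u).trans hu)).trans_le hs
  have h := abs_sq_sub_sq_le_abs_arcsin_sq_sub_sq hs' (hu.trans hs)
  rw [← sq_semicircleHeight hu, ← sq_semicircleHeight (abs_arcsin_le_arcsin hu), abs_sq,
    abs_sq] at h
  exact (sq_le_sq₀ (semicircleHeight_nonneg _ _) (semicircleHeight_nonneg _ _)).1 h

lemma semicircleHeight_arcsin_le_two_mul (hs : s ≤ 1 / 2) (hu : |u| ≤ s) :
    H (arcsin s) (arcsin u) ≤ 2 * H s u := by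
  have hs' : |s| ≤ 1 / 2 := (abs_of_nonneg ((abs_nonneg u).trans hu)).trans_le hs
  have h := abs_arcsin_sq_sub_sq_le hs' (hu.trans hs)
  rw [← sq_semicircleHeight hu, ← sq_semicircleHeight (abs_arcsin_le_arcsin hu), abs_sq,
    abs_sq] at h
  refine (sq_le_sq₀ (semicircleHeight_nonneg _ _) ?_).1 (h.trans_eq (by ring))
  exact mul_nonneg zero_le_two (semicircleHeight_nonneg _ _)

lemma abs_semicircleHeight_sub_le (hs : s ≤ 1 / 2) (hu₁ : |u₁| ≤ s) (hu₂ : |u₂| ≤ s) :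
    |H s u₁ - H s u₂| ≤ 2 * |H (arcsin s) (arcsin u₁) - H (arcsin s) (arcsin u₂)| := by
  have hsq := abs_sq_sub_sq_le_abs_arcsin_sq_sub_sq (hu₁.trans (by linarith))
    (hu₂.trans (by linarith))
  rw [← abs_semicircleHeight_sq_sub_sq hu₁ hu₂, ← abs_semicircleHeight_sq_sub_sq
    (abs_arcsin_le_arcsin hu₁) (abs_arcsin_le_arcsin hu₂)] at hsq
  simpa using abs_sub_le_of_abs_sq_sub_sq_le (semicircleHeight_nonneg _ _)
    (semicircleHeight_nonneg _ _) (semicircleHeight_nonneg _ _) (semicircleHeight_nonneg _ _)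
    zero_le_one (hsq.trans_eq (one_mul _).symm) (k := 2)
    (by linarith [semicircleHeight_arcsin_le_two_mul hs hu₁,
      semicircleHeight_arcsin_le_two_mul hs hu₂])

lemma abs_semicircleHeight_arcsin_sub_le (hs : s ≤ 1 / 2) (hu₁ : |u₁| ≤ s) (hu₂ : |u₂| ≤ s) :
    |H (arcsin s) (arcsin u₁) - H (arcsin s) (arcsin u₂)| ≤ 4 * |H s u₁ - H s u₂| := by
  have hsq := abs_arcsin_sq_sub_sq_le (hu₁.trans hs) (hu₂.trans hs)
  rw [← abs_semicircleHeight_sq_sub_sq hu₁ hu₂, ← abs_semicircleHeight_sq_sub_sq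
    (abs_arcsin_le_arcsin hu₁) (abs_arcsin_le_arcsin hu₂)] at hsq
  simpa using abs_sub_le_of_abs_sq_sub_sq_le (semicircleHeight_nonneg _ _)
    (semicircleHeight_nonneg _ _) (semicircleHeight_nonneg _ _) (semicircleHeight_nonneg _ _)
    (by norm_num) hsq (k := 1)
    (by linarith [semicircleHeight_le_semicircleHeight_arcsin (hs.trans (by norm_num)) hu₁,
      semicircleHeight_le_semicircleHeight_arcsin (hs.trans (by norm_num)) hu₂])

lemma sqrt_arcsin_dist_le (hs : s ≤ 1 / 2) (hu₁ : |u₁| ≤ s) (hu₂ : |u₂| ≤ s) :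
    √(|arcsin u₁ - arcsin u₂| ^ 2 + |H (arcsin s) (arcsin u₁) - H (arcsin s) (arcsin u₂)| ^ 2) ≤
      4 * √(|u₁ - u₂| ^ 2 + |H s u₁ - H s u₂| ^ 2) :=
  sqrt_sq_add_sq_le (by norm_num)
    ((abs_arcsin_sub_le (hu₁.trans hs) (hu₂.trans hs)).trans (by linarith [abs_nonneg (u₁ - u₂)]))
    (abs_semicircleHeight_arcsin_sub_le hs hu₁ hu₂)

lemma sqrt_dist_le_two_mul_sqrt_arcsin_dist (hs : s ≤ 1 / 2) (hu₁ : |u₁| ≤ s) (hu₂ : |u₂| ≤ s) :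
    √(|u₁ - u₂| ^ 2 + |H s u₁ - H s u₂| ^ 2) ≤
      2 * √(|arcsin u₁ - arcsin u₂| ^ 2 +
        |H (arcsin s) (arcsin u₁) - H (arcsin s) (arcsin u₂)| ^ 2) :=
  sqrt_sq_add_sq_le zero_le_two
    ((abs_sub_le_abs_arcsin_sub (hu₁.trans (by linarith)) (hu₂.trans (by linarith))).trans
      (by linarith [abs_nonneg (arcsin u₁ - arcsin u₂)]))
    (abs_semicircleHeight_sub_le hs hu₁ hu₂)

lemma semicircleHeight_mul_cos {t : ℝ} (hs : 0 ≤ s) (ht : 0 ≤ sin t) :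
    H s (s * cos t) = s * sin t := by
  rw [semicircleHeight, show s ^ 2 - (s * cos t) ^ 2 = (s * sin t) ^ 2 by
    linear_combination -s ^ 2 * sin_sq_add_cos_sq t]
  exact sqrt_sq (mul_nonneg hs ht)

end SemicircleHeight

lemma sqrt_chord_eq (a b : ℝ) {s : ℝ} (hs : 0 ≤ s) :
    √(|s * cos a - s * cos b| ^ 2 + |s * sin a - s * sin b| ^ 2) = 2 * s * |sin ((a - b) / 2)| := by
  rw [sq_abs, sq_abs, ← mul_sub, ← mul_sub, cos_sub_cos, sin_sub_sin,
    show (s * (-2 * sin ((a + b) / 2) * sin ((a - b) / 2))) ^ 2 +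
        (s * (2 * sin ((a - b) / 2) * cos ((a + b) / 2))) ^ 2 = (2 * s * sin ((a - b) / 2)) ^ 2 by
      linear_combination (2 * s * sin ((a - b) / 2)) ^ 2 * sin_sq_add_cos_sq ((a + b) / 2),
    sqrt_sq_eq_abs, abs_mul, abs_of_nonneg (by positivity : 0 ≤ 2 * s)]

lemma abs_sub_div_pi_le_abs_sin_half {a b : ℝ} (ha : a ∈ Icc 0 π) (hb : b ∈ Icc 0 π) :
    |a - b| / π ≤ |sin ((a - b) / 2)| := by
  have h := mul_abs_le_abs_sin (x := (a - b) / 2)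
    (by rw [abs_div, abs_two]; linarith [abs_sub_le_of_nonneg_of_le ha.1 ha.2 hb.1 hb.2])
  rw [abs_div, abs_two] at h
  calc |a - b| / π = 2 / π * (|a - b| / 2) := by field_simp
    _ ≤ |sin ((a - b) / 2)| := h

lemma rho2_arcsin_mul_cos_bounds {α t₁ t₂ : ℝ} (hα₀ : 0 < α) (hα : α ≤ 1 / 2)
    (ht₁ : t₁ ∈ Icc 0 π) (ht₂ : t₂ ∈ Icc 0 π) :
    sin α / α * |sin ((t₁ - t₂) / 2)| ≤
        rho2 α (arcsin (sin α * cos t₁)) (arcsin (sin α * cos t₂)) ∧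
      rho2 α (arcsin (sin α * cos t₁)) (arcsin (sin α * cos t₂)) ≤
        8 * (sin α / α) * |sin ((t₁ - t₂) / 2)| := by
  have hπ := pi_gt_three
  set s := sin α
  have hs₀ : 0 ≤ s := sin_nonneg_of_nonneg_of_le_pi hα₀.le (by linarith)
  have hs : s ≤ 1 / 2 := (sin_le hα₀.le).trans hα
  have hu : ∀ t, |s * cos t| ≤ s := fun t => by
    rw [abs_mul, abs_of_nonneg hs₀]
    exact mul_le_of_le_one_right hs₀ (abs_cos_le_one t)
  have hv : ∀ t ∈ Icc 0 π, semicircleHeight s (s * cos t) = s * sin t := fun t ht =>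
    semicircleHeight_mul_cos hs₀ (sin_nonneg_of_nonneg_of_le_pi ht.1 ht.2)
  have hupper := sqrt_arcsin_dist_le hs (hu t₁) (hu t₂)
  have hlower := sqrt_dist_le_two_mul_sqrt_arcsin_dist hs (hu t₁) (hu t₂)
  rw [arcsin_sin (by linarith) (by linarith), hv t₁ ht₁, hv t₂ ht₂, sqrt_chord_eq t₁ t₂ hs₀]
    at hupper hlower
  rw [rho2, one_div, div_eq_inv_mul]
  constructor
  · rw [mul_assoc]
    exact mul_le_mul_of_nonneg_left (by linarith) (inv_nonneg.2 hα₀.le)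
  · rw [show 8 * (α⁻¹ * s) * |sin ((t₁ - t₂) / 2)| = α⁻¹ * (8 * s * |sin ((t₁ - t₂) / 2)|) by ring]
    exact mul_le_mul_of_nonneg_left (by linarith) (inv_nonneg.2 hα₀.le)

/-- Equivalence of ρ₂ with the parameter metric ρ₃(x₁,x₂) = |t₁ - t₂|, where
x_i = arcsin((sin α)·cos t_i), with an absolute constant independent of α, t₁, t₂. -/
theorem stmt_2 :
    ∃ C : ℝ, 0 < C ∧ ∀ (α t₁ t₂ : ℝ), 0 < α → α ≤ 1/2 →
      t₁ ∈ Set.Icc (0:ℝ) Real.pi → t₂ ∈ Set.Icc (0:ℝ) Real.pi →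
      C⁻¹ * |t₁ - t₂| ≤
        (1/α) * Real.sqrt (|Real.arcsin (Real.sin α * Real.cos t₁) -
              Real.arcsin (Real.sin α * Real.cos t₂)|^2 +
            |Real.sqrt (α^2 - (Real.arcsin (Real.sin α * Real.cos t₁))^2) -
              Real.sqrt (α^2 - (Real.arcsin (Real.sin α * Real.cos t₂))^2)|^2) ∧
      (1/α) * Real.sqrt (|Real.arcsin (Real.sin α * Real.cos t₁) -
              Real.arcsin (Real.sin α * Real.cos t₂)|^2 +
            |Real.sqrt (α^2 - (Real.arcsin (Real.sin α * Real.cos t₁))^2) -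
              Real.sqrt (α^2 - (Real.arcsin (Real.sin α * Real.cos t₂))^2)|^2)
        ≤ C * |t₁ - t₂| := by
  refine ⟨5, by norm_num, fun α t₁ t₂ hα₀ hα ht₁ ht₂ => ?_⟩
  change 5⁻¹ * |t₁ - t₂| ≤ rho2 α _ _ ∧ rho2 α _ _ ≤ 5 * |t₁ - t₂|
  obtain ⟨hlower, hupper⟩ := rho2_arcsin_mul_cos_bounds hα₀ hα ht₁ ht₂
  have hπ := pi_gt_three
  have hsin_α : 2 / π ≤ sin α / α := by
    rw [le_div_iff₀ hα₀]
    exact mul_le_sin hα₀.le (by linarith)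
  have hsin_α' : sin α / α ≤ 1 := (div_le_one hα₀).2 (sin_le hα₀.le)
  have hsin_le : |sin ((t₁ - t₂) / 2)| ≤ |t₁ - t₂| / 2 := by
    simpa [abs_div] using abs_sin_le_abs (x := (t₁ - t₂) / 2)
  have hsin_ge := abs_sub_div_pi_le_abs_sin_half ht₁ ht₂
  constructor
  · have hπ2 : π ^ 2 < 10 := by nlinarith [pi_lt_d2]
    calc 5⁻¹ * |t₁ - t₂| ≤ 2 / π * (|t₁ - t₂| / π) := by
          rw [show 2 / π * (|t₁ - t₂| / π) = 2 / π ^ 2 * |t₁ - t₂| by ring]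
          gcongr
          rw [le_div_iff₀ (by positivity)]
          linarith
      _ ≤ sin α / α * |sin ((t₁ - t₂) / 2)| :=
          mul_le_mul hsin_α hsin_ge (by positivity) ((by positivity : (0 : ℝ) ≤ 2 / π).trans hsin_α)
      _ ≤ _ := hlower
  · calc _ ≤ 8 * (sin α / α) * |sin ((t₁ - t₂) / 2)| := hupper
      _ ≤ 8 * 1 * (|t₁ - t₂| / 2) := by gcongr
      _ ≤ 5 * |t₁ - t₂| := by linarith [abs_nonneg (t₁ - t₂)]
end

section
/- Let α ∈ (0, 1/2], x ∈ [-α, α], and r ∈ (0, 1). Define ρ₁(x,y) = (1/α)·√(|x-y|² + α·|√(b_x) - √(b_y)|²) where b_u = min{|u+α|, |u-α|}. Then the ball B_{ρ₁}(x,r) = {y ∈ [-α,α] : ρ₁(x,y) ≤ r} is contained in [x - αr, x + αr] ∩ [-α, α], and its Lebesgue measure satisfies |B_{ρ₁}(x,r)| ≍ α·(r² + r·√(1 - (x/α)²)), with constants of equivalence independent of x, r, and α. -/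
open MeasureTheory

/-- The boundary-adapted metric on [-α,α]. -/
noncomputable def rho1 (α x y : ℝ) : ℝ :=
  (1/α) * Real.sqrt (|x - y|^2 +
    α * |Real.sqrt (min |x + α| |x - α|) - Real.sqrt (min |y + α| |y - α|)|^2)

lemma min_abs_eq {α z : ℝ} (h1 : -α ≤ z) (h2 : z ≤ α) :
    min |z + α| |z - α| = α - |z| := by
  rw [abs_of_nonneg (by linarith), abs_of_nonpos (by linarith)]
  rcases le_total z 0 with h | h
  · rw [abs_of_nonpos h, min_eq_left (by linarith)]; ring
  · rw [abs_of_nonneg h, min_eq_right (by linarith)]; ring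

lemma abs_le_of_sq_le_sq'' {a b : ℝ} (hb : 0 ≤ b) (h : a^2 ≤ b^2) : |a| ≤ b := by
  have := Real.sqrt_le_sqrt h
  rwa [Real.sqrt_sq_eq_abs, Real.sqrt_sq hb] at this

lemma sqrt_sub_sq_le_abs {a c : ℝ} (ha : 0 ≤ a) (hc : 0 ≤ c) :
    (Real.sqrt a - Real.sqrt c) ^ 2 ≤ |a - c| := by
  rcases le_total a c with h | h
  · rw [abs_of_nonpos (by linarith)]
    nlinarith [Real.sq_sqrt ha, Real.sq_sqrt hc, Real.sqrt_nonneg a, Real.sqrt_nonneg c,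
      mul_nonneg (Real.sqrt_nonneg a) (sub_nonneg.2 (Real.sqrt_le_sqrt h))]
  · rw [abs_of_nonneg (by linarith)]
    nlinarith [Real.sq_sqrt ha, Real.sq_sqrt hc, Real.sqrt_nonneg a, Real.sqrt_nonneg c,
      mul_nonneg (Real.sqrt_nonneg c) (sub_nonneg.2 (Real.sqrt_le_sqrt h))]

lemma sqrt_sub_sq_le_div {a c : ℝ} (ha : 0 < a) (hc : 0 ≤ c) :
    (Real.sqrt a - Real.sqrt c) ^ 2 ≤ (a - c) ^ 2 / a := by
  rw [le_div_iff₀ ha]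
  nlinarith [Real.sq_sqrt ha.le, Real.sq_sqrt hc, Real.sqrt_nonneg a, Real.sqrt_nonneg c,
    mul_nonneg (mul_nonneg (sq_nonneg (Real.sqrt a - Real.sqrt c)) (Real.sqrt_nonneg a))
      (Real.sqrt_nonneg c),
    mul_nonneg (sq_nonneg (Real.sqrt a - Real.sqrt c)) (sq_nonneg (Real.sqrt c))]

lemma rho1_le_iff {α x y r : ℝ} (hα : 0 < α) (hx1 : -α ≤ x) (hx2 : x ≤ α)
    (hy1 : -α ≤ y) (hy2 : y ≤ α) (hr : 0 ≤ r) :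
    rho1 α x y ≤ r ↔
      (x - y) ^ 2 + α * (Real.sqrt (α - |x|) - Real.sqrt (α - |y|)) ^ 2 ≤ (α * r) ^ 2 := by
  unfold rho1
  rw [min_abs_eq hx1 hx2, min_abs_eq hy1 hy2, sq_abs, sq_abs, one_div,
    inv_mul_le_iff₀ hα, ← Real.sqrt_le_left (by positivity : (0:ℝ) ≤ α * r)]

set_option maxHeartbeats 2000000 in
/-- Inclusion and volume estimate for ρ₁-balls in [-α,α], α ∈ (0,1/2],
with constants of equivalence independent of x, r, α. -/
theorem stmt_3 :
    ∃ c C : ℝ, 0 < c ∧ 0 < C ∧ ∀ (α x r : ℝ), 0 < α → α ≤ 1/2 →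
      x ∈ Set.Icc (-α) α → 0 < r → r < 1 →
      {y | y ∈ Set.Icc (-α) α ∧ rho1 α x y ≤ r} ⊆
        Set.Icc (x - α*r) (x + α*r) ∩ Set.Icc (-α) α ∧
      c * (α * (r^2 + r * Real.sqrt (1 - (x/α)^2)))
        ≤ (volume {y | y ∈ Set.Icc (-α) α ∧ rho1 α x y ≤ r}).toReal ∧
      (volume {y | y ∈ Set.Icc (-α) α ∧ rho1 α x y ≤ r}).toReal
        ≤ C * (α * (r^2 + r * Real.sqrt (1 - (x/α)^2))) := by
  refine ⟨1/8, 8, by norm_num, by norm_num, ?_⟩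
  intro α x r hα hα2 hx hr hr1
  obtain ⟨hx1, hx2⟩ := hx
  set B := {y | y ∈ Set.Icc (-α) α ∧ rho1 α x y ≤ r} with hBdef
  set b : ℝ := α - |x| with hbdef
  have hxa : |x| ≤ α := abs_le.2 ⟨hx1, hx2⟩
  have hb0 : 0 ≤ b := by simp only [hbdef]; linarith
  have hbα : b ≤ α := by simp only [hbdef]; have := abs_nonneg x; linarith
  have hmem : ∀ y, y ∈ B ↔ (y ∈ Set.Icc (-α) α ∧
      (x - y)^2 + α*(Real.sqrt b - Real.sqrt (α - |y|))^2 ≤ (α*r)^2) := by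
    intro y
    simp only [hBdef, Set.mem_setOf_eq, Set.mem_Icc, hbdef]
    constructor
    · rintro ⟨⟨h1, h2⟩, h3⟩
      exact ⟨⟨h1, h2⟩, (rho1_le_iff hα hx1 hx2 h1 h2 hr.le).1 h3⟩
    · rintro ⟨⟨h1, h2⟩, h3⟩
      exact ⟨⟨h1, h2⟩, (rho1_le_iff hα hx1 hx2 h1 h2 hr.le).2 h3⟩
  -- the target quantity
  have hsq1 : 0 ≤ 1 - (x/α)^2 := by
    have : (x/α)^2 ≤ 1 := by
      rw [div_pow, div_le_one (by positivity)]
      nlinarith [sq_abs x]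
    linarith
  have hG0 : 0 ≤ r^2 + r * Real.sqrt (1 - (x/α)^2) := by positivity
  -- √(αb) vs α√(1-(x/α)²)
  have he2 : α^2 * (1 - (x/α)^2) = α^2 - x^2 := by field_simp
  have hsab : Real.sqrt (α*b) ≤ α * Real.sqrt (1 - (x/α)^2) := by
    have h1 : α * b ≤ α^2 * (1 - (x/α)^2) := by
      rw [he2, hbdef]; nlinarith [sq_abs x, abs_nonneg x]
    calc Real.sqrt (α*b) ≤ Real.sqrt (α^2 * (1 - (x/α)^2)) := Real.sqrt_le_sqrt h1
      _ = α * Real.sqrt (1 - (x/α)^2) := by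
          rw [Real.sqrt_mul (sq_nonneg α), Real.sqrt_sq hα.le]
  have hsab2 : α * Real.sqrt (1 - (x/α)^2) ≤ Real.sqrt 2 * Real.sqrt (α*b) := by
    have h1 : α^2 * (1 - (x/α)^2) ≤ 2 * (α * b) := by
      rw [he2, hbdef]; nlinarith [sq_abs x, abs_nonneg x]
    calc α * Real.sqrt (1 - (x/α)^2) = Real.sqrt (α^2 * (1 - (x/α)^2)) := by
          rw [Real.sqrt_mul (sq_nonneg α), Real.sqrt_sq hα.le]
      _ ≤ Real.sqrt (2 * (α*b)) := Real.sqrt_le_sqrt h1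
      _ = Real.sqrt 2 * Real.sqrt (α*b) := Real.sqrt_mul (by norm_num) _
  -- Part 1 : inclusion
  have hincl : B ⊆ Set.Icc (x - α*r) (x + α*r) ∩ Set.Icc (-α) α := by
    intro y hy
    obtain ⟨⟨h1, h2⟩, h3⟩ := (hmem y).1 hy
    have h4 : (x - y)^2 ≤ (α*r)^2 := by
      nlinarith [sq_nonneg (Real.sqrt b - Real.sqrt (α - |y|)), hα.le]
    have h5 : |x - y| ≤ α*r := abs_le_of_sq_le_sq'' (by positivity) h4
    rw [abs_le] at h5
    exact ⟨Set.mem_Icc.2 ⟨by linarith, by linarith⟩, Set.mem_Icc.2 ⟨h1, h2⟩⟩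
  refine ⟨hincl, ?_, ?_⟩
  -- Part 2 : lower bound
  · set δ : ℝ := max (α*r^2/2) (r * Real.sqrt (α*b) / 2) with hδdef
    have hδ1 : α*r^2/2 ≤ δ := le_max_left _ _
    have hδ2 : r * Real.sqrt (α*b) / 2 ≤ δ := le_max_right _ _
    have hδpos : 0 < δ := lt_of_lt_of_le (by positivity) hδ1
    have hsabα : Real.sqrt (α*b) ≤ α := by
      calc Real.sqrt (α*b) ≤ Real.sqrt (α*α) := Real.sqrt_le_sqrt (by nlinarith)
        _ = α := Real.sqrt_mul_self hα.le
    have hδle : δ ≤ α*r/2 := by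
      apply max_le
      · nlinarith [mul_nonneg (mul_nonneg hα.le hr.le) (sub_nonneg.2 hr1.le)]
      · rw [div_le_div_iff_of_pos_right (by norm_num)]
        calc r * Real.sqrt (α*b) ≤ r * α := by nlinarith
          _ = α * r := mul_comm _ _
    -- pointwise estimate
    have hpt : ∀ y, -α ≤ y → y ≤ α → |x - y| ≤ δ →
        (x - y)^2 + α*(Real.sqrt b - Real.sqrt (α - |y|))^2 ≤ (α*r)^2 := by
      intro y hy1 hy2 hxy
      have hby0 : (0:ℝ) ≤ α - |y| := by
        have : |y| ≤ α := abs_le.2 ⟨hy1, hy2⟩; linarith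
      have hbb : |b - (α - |y|)| ≤ δ := by
        have h1 : b - (α - |y|) = |y| - |x| := by rw [hbdef]; ring
        rw [h1]
        exact le_trans (le_trans (abs_abs_sub_abs_le_abs_sub y x)
          (le_of_eq (abs_sub_comm y x))) hxy
      have hxy2 : (x - y)^2 ≤ (α*r)^2/4 := by
        have h1 : (x-y)^2 ≤ δ^2 := by
          rw [← sq_abs (x-y)]
          exact pow_le_pow_left₀ (abs_nonneg _) hxy 2
        have h2 : δ^2 ≤ (α*r/2)^2 := pow_le_pow_left₀ hδpos.le hδle 2
        nlinarith
      have hsecond : α*(Real.sqrt b - Real.sqrt (α - |y|))^2 ≤ 3*(α*r)^2/4 := by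
        rcases le_total (r * Real.sqrt (α*b) / 2) (α*r^2/2) with hc | hc
        · have hδeq : δ = α*r^2/2 := max_eq_left hc
          have h1 : (Real.sqrt b - Real.sqrt (α - |y|))^2 ≤ δ :=
            le_trans (sqrt_sub_sq_le_abs hb0 hby0) hbb
          rw [hδeq] at h1
          nlinarith
        · have hδeq : δ = r * Real.sqrt (α*b) / 2 := max_eq_right hc
          have hbpos : 0 < b := by
            by_contra h
            push_neg at h
            have hb00 : b = 0 := le_antisymm h hb0
            rw [hb00, mul_zero, Real.sqrt_zero] at hδeq
            simp at hδeq
            nlinarith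
          have h1 : (Real.sqrt b - Real.sqrt (α - |y|))^2 ≤ δ^2/b :=
            le_trans (sqrt_sub_sq_le_div hbpos hby0)
              (by
                have hnum : (b - (α - |y|))^2 ≤ δ^2 := by
                  rw [← sq_abs (b - (α - |y|))]
                  exact pow_le_pow_left₀ (abs_nonneg _) hbb 2
                gcongr)
          have h2 : δ^2 = r^2 * (α*b) / 4 := by
            rw [hδeq]
            have : Real.sqrt (α*b) ^ 2 = α*b := Real.sq_sqrt (by positivity)
            nlinarith
          rw [h2] at h1
          have h3 : r^2 * (α*b)/4/b = α*r^2/4 := by field_simp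
          rw [h3] at h1
          nlinarith
      nlinarith
    -- the interval inside B
    have hIB : ∃ a : ℝ, Set.Icc a (a + δ) ⊆ B := by
      rcases le_total 0 x with hx0 | hx0
      · refine ⟨x - δ, ?_⟩
        intro y hy
        obtain ⟨hy1, hy2⟩ := hy
        have hy2' : y ≤ x := by linarith
        have hyl : -α ≤ y := by nlinarith
        have hyr : y ≤ α := le_trans hy2' hx2
        refine (hmem y).2 ⟨Set.mem_Icc.2 ⟨hyl, hyr⟩, hpt y hyl hyr ?_⟩
        rw [abs_le]; constructor <;> linarith
      · refine ⟨x, ?_⟩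
        intro y hy
        obtain ⟨hy1, hy2⟩ := hy
        have hyl : -α ≤ y := le_trans hx1 hy1
        have hyr : y ≤ α := by nlinarith
        refine (hmem y).2 ⟨Set.mem_Icc.2 ⟨hyl, hyr⟩, hpt y hyl hyr ?_⟩
        rw [abs_le]; constructor <;> linarith
    obtain ⟨a, haB⟩ := hIB
    have hfin : volume B ≠ ⊤ := by
      apply ne_top_of_le_ne_top _ (measure_mono (fun y hy => ((hmem y).1 hy).1))
      rw [Real.volume_Icc]
      exact ENNReal.ofReal_ne_top
    have hvol1 : ENNReal.ofReal δ ≤ volume B := by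
      calc ENNReal.ofReal δ = volume (Set.Icc a (a+δ)) := by
            rw [Real.volume_Icc]; ring_nf
        _ ≤ volume B := measure_mono haB
    have hvol2 : δ ≤ (volume B).toReal := by
      calc δ = (ENNReal.ofReal δ).toReal := (ENNReal.toReal_ofReal hδpos.le).symm
        _ ≤ (volume B).toReal := ENNReal.toReal_mono hfin hvol1
    -- α*(r² + r√(1-(x/α)²)) ≤ 8δ
    have hs2 : Real.sqrt 2 ≤ 3/2 := by
      rw [Real.sqrt_le_left (by norm_num)]; norm_num
    have hfinal : α * (r^2 + r * Real.sqrt (1 - (x/α)^2)) ≤ 8 * δ := by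
      have h1 : α * r^2 ≤ 2 * δ := by linarith
      have h2 : r * (α * Real.sqrt (1 - (x/α)^2)) ≤ r * (Real.sqrt 2 * Real.sqrt (α*b)) :=
        mul_le_mul_of_nonneg_left hsab2 hr.le
      have h3 : r * (Real.sqrt 2 * Real.sqrt (α*b)) ≤ (3/2) * (r * Real.sqrt (α*b)) := by
        have hs0 : 0 ≤ Real.sqrt (α*b) := Real.sqrt_nonneg _
        nlinarith [mul_le_mul_of_nonneg_left hs2 (mul_nonneg hr.le hs0)]
      have h4 : r * Real.sqrt (α*b) ≤ 2 * δ := by linarith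
      nlinarith [Real.sqrt_nonneg (α*b)]
    linarith
  -- Part 3 : upper bound
  · set s : ℝ := Real.sqrt b with hsdef
    set u : ℝ := Real.sqrt α * r with hudef
    have hs0 : 0 ≤ s := Real.sqrt_nonneg _
    have hu0 : 0 ≤ u := by positivity
    have hu2 : u^2 = α * r^2 := by
      rw [hudef, mul_pow, Real.sq_sqrt hα.le]
    have hs2 : s^2 = b := Real.sq_sqrt hb0
    set M : ℝ := s + u with hMdef
    set m : ℝ := max 0 (s - u) with hmdef
    have hm0 : 0 ≤ m := le_max_left _ _
    have hmM : m ≤ M := by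
      apply max_le <;> [positivity; linarith]
    have hsub : B ⊆ Set.Icc (α - M^2) (α - m^2) ∪ Set.Icc (-(α - m^2)) (-(α - M^2)) := by
      intro y hy
      obtain ⟨⟨h1, h2⟩, h3⟩ := (hmem y).1 hy
      have hya : |y| ≤ α := abs_le.2 ⟨h1, h2⟩
      have hby0 : (0:ℝ) ≤ α - |y| := by linarith
      set sy : ℝ := Real.sqrt (α - |y|) with hsydef
      have hsy0 : 0 ≤ sy := Real.sqrt_nonneg _
      have hsy2 : sy^2 = α - |y| := Real.sq_sqrt hby0
      have h4 : (s - sy)^2 ≤ u^2 := by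
        rw [hu2]
        nlinarith [sq_nonneg (x - y)]
      have h5 : |s - sy| ≤ u := abs_le_of_sq_le_sq'' hu0 h4
      rw [abs_le] at h5
      have hsyM : sy ≤ M := by rw [hMdef]; linarith
      have hsym : m ≤ sy := max_le hsy0 (by linarith)
      have hbyM : α - |y| ≤ M^2 := by
        rw [← hsy2]; exact pow_le_pow_left₀ hsy0 hsyM 2
      have hbym : m^2 ≤ α - |y| := by
        rw [← hsy2]; exact pow_le_pow_left₀ hm0 hsym 2
      rcases le_total 0 y with hy0 | hy0
      · left
        rw [abs_of_nonneg hy0] at hbyM hbym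
        exact Set.mem_Icc.2 ⟨by linarith, by linarith⟩
      · right
        rw [abs_of_nonpos hy0] at hbyM hbym
        exact Set.mem_Icc.2 ⟨by linarith, by linarith⟩
    have hD0 : 0 ≤ M^2 - m^2 := by nlinarith
    have hvol : (volume B).toReal ≤ 2 * (M^2 - m^2) := by
      apply ENNReal.toReal_le_of_le_ofReal (by linarith)
      calc volume B ≤ volume (Set.Icc (α - M^2) (α - m^2)) +
            volume (Set.Icc (-(α - m^2)) (-(α - M^2))) :=
            le_trans (measure_mono hsub) (measure_union_le _ _)
        _ = ENNReal.ofReal (M^2 - m^2) + ENNReal.ofReal (M^2 - m^2) := by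
            rw [Real.volume_Icc, Real.volume_Icc]; ring_nf
        _ = ENNReal.ofReal (2 * (M^2 - m^2)) := by
            rw [← ENNReal.ofReal_add hD0 hD0]; ring_nf
    have hMm : M^2 - m^2 ≤ 4*α*r^2 + 4*(r * Real.sqrt (α*b)) := by
      have hsu : Real.sqrt α * s = Real.sqrt (α*b) := (Real.sqrt_mul hα.le b).symm
      rcases le_total s u with hc | hc
      · have hm2 : 0 ≤ m^2 := sq_nonneg m
        have : M^2 ≤ 4*u^2 + 4*(u*s) := by rw [hMdef]; nlinarith
        have hus : u * s = r * Real.sqrt (α*b) := by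
          rw [hudef, ← hsu]; ring
        rw [hus, hu2] at this
        nlinarith [mul_nonneg hr.le (Real.sqrt_nonneg (α*b))]
      · have hmge : s - u ≤ m := le_max_right _ _
        have hm2 : (s-u)^2 ≤ m^2 := by nlinarith
        have : M^2 - m^2 ≤ 4*(u*s) := by rw [hMdef]; nlinarith
        have hus : u * s = r * Real.sqrt (α*b) := by
          rw [hudef, ← hsu]; ring
        rw [hus] at this
        nlinarith [hα.le, sq_nonneg r]
    have hfin2 : r * Real.sqrt (α*b) ≤ r * (α * Real.sqrt (1 - (x/α)^2)) :=
      mul_le_mul_of_nonneg_left hsab hr.le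
    calc (volume B).toReal ≤ 2 * (M^2 - m^2) := hvol
      _ ≤ 8*α*r^2 + 8*(r * Real.sqrt (α*b)) := by linarith
      _ ≤ 8*α*r^2 + 8*(r * (α * Real.sqrt (1 - (x/α)^2))) := by linarith
      _ = 8 * (α * (r^2 + r * Real.sqrt (1 - (x/α)^2))) := by ring
end

section
/- Let α ∈ (0, 1/2], r ∈ (0,1), β ≥ 1, and let A ⊂ [-α,α] be (r, ρ₁)-separable, i.e. ρ₁(ξ, ξ') ≥ r for all distinct ξ, ξ' ∈ A. Then sup over x ∈ [-α,α] of the number of ξ ∈ A with ρ₁(x,ξ) ≤ βr is at most C·β³, where C is an absolute constant. -/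
private lemma floor_eq_abs_lt {a b : ℝ} (h : ⌊a⌋ = ⌊b⌋) : |a - b| < 1 := by
  have h1 := Int.floor_le a
  have h2 := Int.lt_floor_add_one a
  have h3 := Int.floor_le b
  have h4 := Int.lt_floor_add_one b
  rw [h] at h1 h2
  rw [abs_sub_lt_iff]
  constructor <;> linarith

private lemma my_sqrt_add_le {a b : ℝ} (ha : 0 ≤ a) (hb : 0 ≤ b) :
    Real.sqrt (a + b) ≤ Real.sqrt a + Real.sqrt b := by
  have h1 := Real.sq_sqrt ha
  have h2 := Real.sq_sqrt hb
  have h3 := Real.sqrt_nonneg a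
  have h4 := Real.sqrt_nonneg b
  have : a + b ≤ (Real.sqrt a + Real.sqrt b)^2 := by nlinarith
  calc Real.sqrt (a + b) ≤ Real.sqrt ((Real.sqrt a + Real.sqrt b)^2) :=
        Real.sqrt_le_sqrt this
    _ = Real.sqrt a + Real.sqrt b := Real.sqrt_sq (by linarith)

private noncomputable def gfun (α u : ℝ) : ℝ := Real.sqrt (min |u + α| |u - α|)

private lemma rho1_eq (α y z : ℝ) :
    rho1 α y z = (1/α) * Real.sqrt (|y - z|^2 + α * |gfun α y - gfun α z|^2) := rfl

/-- components bound from an upper bound on rho1 -/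
private lemma rho1_comps {α s y z : ℝ} (hα : 0 < α) (_hs : 0 ≤ s)
    (h : rho1 α y z ≤ s) :
    |y - z| ≤ α * s ∧ Real.sqrt α * |gfun α y - gfun α z| ≤ α * s := by
  rw [rho1_eq] at h
  set d := |y - z| with hd
  set t := |gfun α y - gfun α z| with ht
  have hd0 : 0 ≤ d := abs_nonneg _
  have ht0 : 0 ≤ t := abs_nonneg _
  have hS0 : 0 ≤ d^2 + α * t^2 := by positivity
  have hS : Real.sqrt (d^2 + α * t^2) ≤ α * s := by
    have h' : Real.sqrt (d^2 + α * t^2) / α ≤ s := by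
      rw [div_eq_mul_inv, mul_comm, ← one_div]; exact h
    have := (div_le_iff₀ hα).mp h'
    linarith [this]
  constructor
  · have : d = Real.sqrt (d^2) := (Real.sqrt_sq hd0).symm
    rw [this]
    calc Real.sqrt (d^2) ≤ Real.sqrt (d^2 + α * t^2) :=
          Real.sqrt_le_sqrt (by nlinarith)
      _ ≤ α * s := hS
  · have heq : Real.sqrt α * t = Real.sqrt (α * t^2) := by
      rw [Real.sqrt_mul hα.le, Real.sqrt_sq ht0]
    rw [heq]
    calc Real.sqrt (α * t^2) ≤ Real.sqrt (d^2 + α * t^2) :=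
          Real.sqrt_le_sqrt (by nlinarith)
      _ ≤ α * s := hS

/-- lower bound: separation -/
private lemma rho1_lower {α r y z : ℝ} (hα : 0 < α) (h : r ≤ rho1 α y z) :
    α * r ≤ |y - z| + Real.sqrt α * |gfun α y - gfun α z| := by
  rw [rho1_eq] at h
  set d := |y - z| with hd
  set t := |gfun α y - gfun α z| with ht
  have hd0 : 0 ≤ d := abs_nonneg _
  have ht0 : 0 ≤ t := abs_nonneg _
  have hαr : α * r ≤ Real.sqrt (d^2 + α * t^2) := by
    have := mul_le_mul_of_nonneg_left h hα.le
    calc α * r ≤ α * ((1/α) * Real.sqrt (d^2 + α * t^2)) := this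
      _ = Real.sqrt (d^2 + α * t^2) := by field_simp
  calc α * r ≤ Real.sqrt (d^2 + α * t^2) := hαr
    _ ≤ Real.sqrt (d^2) + Real.sqrt (α * t^2) :=
        my_sqrt_add_le (by positivity) (by positivity)
    _ = d + Real.sqrt α * t := by
        rw [Real.sqrt_sq hd0, Real.sqrt_mul hα.le, Real.sqrt_sq ht0]

private lemma icc_card_le {c b : ℝ} (hb : 0 ≤ b) :
    ((Finset.Icc ⌊c - b⌋ ⌊c + b⌋).card : ℝ) ≤ 2 * b + 2 := by
  have hab : ⌊c - b⌋ ≤ ⌊c + b⌋ := Int.floor_mono (by linarith)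
  rw [Int.card_Icc]
  have h1 : (⌊c + b⌋ + 1 - ⌊c - b⌋).toNat = ⌊c + b⌋ + 1 - ⌊c - b⌋ := by
    apply Int.toNat_of_nonneg; omega
  have : ((⌊c + b⌋ + 1 - ⌊c - b⌋).toNat : ℝ) = ((⌊c + b⌋ : ℝ) + 1 - ⌊c - b⌋) := by
    rw [← Int.cast_natCast, h1]; push_cast; ring
  rw [this]
  have h2 : (⌊c + b⌋ : ℝ) ≤ c + b := Int.floor_le _
  have h3 : c - b - 1 < ⌊c - b⌋ := Int.sub_one_lt_floor _
  linarith

/-- Bounded overlap: an (r,ρ₁)-separable set meets each ball of radius βr in at most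
C·β³ points, with an absolute constant C. -/
theorem stmt_5 :
    ∃ C : ℝ, 0 < C ∧ ∀ (α r β : ℝ) (A : Finset ℝ), 0 < α → α ≤ 1/2 →
      0 < r → r < 1 → 1 ≤ β → (↑A : Set ℝ) ⊆ Set.Icc (-α) α →
      (∀ ξ ∈ A, ∀ ξ' ∈ A, ξ ≠ ξ' → r ≤ rho1 α ξ ξ') →
      ∀ x ∈ Set.Icc (-α) α,
        ((A.filter (fun ξ => rho1 α x ξ ≤ β * r)).card : ℝ) ≤ C * β^3 := by
  refine ⟨36, by norm_num, ?_⟩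
  intro α r β A hα hα2 hr hr1 hβ hA hsep x hx
  have hsα : 0 < Real.sqrt α := Real.sqrt_pos.mpr hα
  have hαr : 0 < α * r := by positivity
  have hsαr : 0 < Real.sqrt α * r := by positivity
  set T := A.filter (fun ξ => rho1 α x ξ ≤ β * r) with hT
  set c₁ : ℝ := 2 * x / (α * r)
  set c₂ : ℝ := 2 * gfun α x / (Real.sqrt α * r)
  set S := Finset.Icc ⌊c₁ - 2*β⌋ ⌊c₁ + 2*β⌋ ×ˢ Finset.Icc ⌊c₂ - 2*β⌋ ⌊c₂ + 2*β⌋ with hSdef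
  set F : ℝ → ℤ × ℤ := fun ξ => (⌊2 * ξ / (α * r)⌋, ⌊2 * gfun α ξ / (Real.sqrt α * r)⌋)
  have hmem : ∀ ξ ∈ T, F ξ ∈ S := by
    intro ξ hξ
    have hξ' := Finset.mem_filter.mp hξ
    have hcomp := rho1_comps hα (by positivity) hξ'.2
    have h1 : |x - ξ| ≤ α * (β * r) := hcomp.1
    have h2 : Real.sqrt α * |gfun α x - gfun α ξ| ≤ α * (β * r) := hcomp.2
    have h2' : |gfun α x - gfun α ξ| ≤ Real.sqrt α * (β * r) := by
      have hαe : Real.sqrt α * Real.sqrt α = α := Real.mul_self_sqrt hα.le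
      have key : Real.sqrt α * (Real.sqrt α * (β * r)) = α * (β * r) := by
        linear_combination (β * r) * hαe
      have h2'' : Real.sqrt α * |gfun α x - gfun α ξ|
          ≤ Real.sqrt α * (Real.sqrt α * (β * r)) := by rw [key]; exact h2
      exact le_of_mul_le_mul_left h2'' hsα
    have hu : |2 * ξ / (α * r) - c₁| ≤ 2 * β := by
      have heq : 2 * ξ / (α * r) - c₁ = 2 * (ξ - x) / (α * r) := by
        show 2 * ξ / (α * r) - 2 * x / (α * r) = 2 * (ξ - x) / (α * r); ring
      rw [heq, abs_div, abs_of_pos hαr, div_le_iff₀ hαr, abs_mul,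
        abs_of_pos (show (0:ℝ) < 2 by norm_num)]
      have hxξ : |ξ - x| ≤ α * (β * r) := by rw [abs_sub_comm]; exact h1
      nlinarith [hxξ]
    have hv : |2 * gfun α ξ / (Real.sqrt α * r) - c₂| ≤ 2 * β := by
      have heq : 2 * gfun α ξ / (Real.sqrt α * r) - c₂
          = 2 * (gfun α ξ - gfun α x) / (Real.sqrt α * r) := by
        show 2 * gfun α ξ / (Real.sqrt α * r) - 2 * gfun α x / (Real.sqrt α * r)
          = 2 * (gfun α ξ - gfun α x) / (Real.sqrt α * r); ring
      rw [heq, abs_div, abs_of_pos hsαr, div_le_iff₀ hsαr, abs_mul,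
        abs_of_pos (show (0:ℝ) < 2 by norm_num)]
      have hxξ : |gfun α ξ - gfun α x| ≤ Real.sqrt α * (β * r) := by
        rw [abs_sub_comm]; exact h2'
      nlinarith [hxξ]
    have hu' := abs_le.mp hu
    have hv' := abs_le.mp hv
    simp only [hSdef, Finset.mem_product, Finset.mem_Icc]
    exact ⟨⟨Int.floor_mono (by linarith [hu'.1]), Int.floor_mono (by linarith [hu'.2])⟩,
      ⟨Int.floor_mono (by linarith [hv'.1]), Int.floor_mono (by linarith [hv'.2])⟩⟩
  have hinj : Set.InjOn F ↑T := by
    intro ξ hξ ξ' hξ' hFeq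
    by_contra hne
    have hξA : ξ ∈ A := (Finset.mem_filter.mp hξ).1
    have hξ'A : ξ' ∈ A := (Finset.mem_filter.mp hξ').1
    have hsep' := hsep ξ hξA ξ' hξ'A hne
    have hlow := rho1_lower hα hsep'
    have hf1 : ⌊2 * ξ / (α * r)⌋ = ⌊2 * ξ' / (α * r)⌋ := congrArg Prod.fst hFeq
    have hf2 : ⌊2 * gfun α ξ / (Real.sqrt α * r)⌋ = ⌊2 * gfun α ξ' / (Real.sqrt α * r)⌋ :=
      congrArg Prod.snd hFeq
    have hd : |ξ - ξ'| < α * r / 2 := by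
      have := floor_eq_abs_lt hf1
      have heq : 2 * ξ / (α * r) - 2 * ξ' / (α * r) = 2 * (ξ - ξ') / (α * r) := by ring
      rw [heq, abs_div, abs_of_pos hαr] at this
      rw [div_lt_one hαr] at this
      rw [abs_mul] at this
      have : 2 * |ξ - ξ'| < α * r := by
        rw [abs_of_pos (by norm_num : (0:ℝ) < 2)] at this; linarith
      linarith
    have ht : |gfun α ξ - gfun α ξ'| < Real.sqrt α * r / 2 := by
      have := floor_eq_abs_lt hf2
      have heq : 2 * gfun α ξ / (Real.sqrt α * r) - 2 * gfun α ξ' / (Real.sqrt α * r)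
          = 2 * (gfun α ξ - gfun α ξ') / (Real.sqrt α * r) := by ring
      rw [heq, abs_div, abs_of_pos hsαr, div_lt_one hsαr, abs_mul] at this
      have : 2 * |gfun α ξ - gfun α ξ'| < Real.sqrt α * r := by
        rw [abs_of_pos (by norm_num : (0:ℝ) < 2)] at this; linarith
      linarith
    have hαe : Real.sqrt α * Real.sqrt α = α := Real.mul_self_sqrt hα.le
    have : Real.sqrt α * |gfun α ξ - gfun α ξ'| < α * r / 2 := by
      calc Real.sqrt α * |gfun α ξ - gfun α ξ'| < Real.sqrt α * (Real.sqrt α * r / 2) := by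
            apply mul_lt_mul_of_pos_left ht hsα
        _ = α * r / 2 := by linear_combination (r / 2) * hαe
    linarith [hlow]
  have hcard : T.card ≤ S.card := Finset.card_le_card_of_injOn F hmem hinj
  have hS1 : ((Finset.Icc ⌊c₁ - 2*β⌋ ⌊c₁ + 2*β⌋).card : ℝ) ≤ 2 * (2*β) + 2 :=
    icc_card_le (by linarith)
  have hS2 : ((Finset.Icc ⌊c₂ - 2*β⌋ ⌊c₂ + 2*β⌋).card : ℝ) ≤ 2 * (2*β) + 2 :=
    icc_card_le (by linarith)
  have hScard : (S.card : ℝ) ≤ (4*β + 2) * (4*β + 2) := by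
    rw [hSdef, Finset.card_product]
    push_cast
    have h1 : (0:ℝ) ≤ (Finset.Icc ⌊c₂ - 2*β⌋ ⌊c₂ + 2*β⌋).card := by positivity
    nlinarith [hS1, hS2]
  calc (T.card : ℝ) ≤ (S.card : ℝ) := by exact_mod_cast hcard
    _ ≤ (4*β + 2) * (4*β + 2) := hScard
    _ ≤ 36 * β^3 := by
        have hb2 : β^2 ≤ β^3 := by nlinarith
        have hb1 : β ≤ β^3 := by nlinarith
        have hb0 : 1 ≤ β^3 := by nlinarith
        nlinarith
end

section
/- Let e ∈ S^d, α ∈ (0, 1/2], and let x = ξ sin θ + e cos θ, y = η sin t + e cos t with ξ, η ⊥ e unit vectors and θ, t ∈ [0, α]. Then the geodesic distance satisfies d(x,y) ≍ |θ - t| + |ξ - η|·√(θ·t), with absolute constants of equivalence (independent of α, θ, t, ξ, η). -/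
open RealInnerProductSpace

lemma half_sin_sq (x : ℝ) : Real.sin (x / 2) ^ 2 = (1 - Real.cos x) / 2 := by
  have h := Real.cos_sq (x / 2)
  have h2 : 2 * (x / 2) = x := by ring
  rw [h2] at h
  have := Real.sin_sq (x / 2)
  linarith

lemma le_of_sq_le_sq' {a b : ℝ} (ha : 0 ≤ a) (hb : 0 ≤ b) (h : a ^ 2 ≤ b ^ 2) : a ≤ b := by
  calc a = Real.sqrt (a ^ 2) := (Real.sqrt_sq ha).symm
    _ ≤ Real.sqrt (b ^ 2) := Real.sqrt_le_sqrt h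
    _ = b := Real.sqrt_sq hb

set_option maxHeartbeats 1000000 in
/-- For points of a cap of radius α ≤ 1/2 in spherical coordinates,
d(x,y) ≍ |θ−t| + |ξ−η|·√(θt), with absolute constants of equivalence. -/
theorem stmt_7 :
    ∃ c C : ℝ, 0 < c ∧ 0 < C ∧
    ∀ (d : ℕ) (e ξ η : EuclideanSpace ℝ (Fin (d+1))) (α θ t : ℝ),
      ‖e‖ = 1 → ‖ξ‖ = 1 → ‖η‖ = 1 → ⟪ξ, e⟫ = 0 → ⟪η, e⟫ = 0 →
      0 < α → α ≤ 1/2 → θ ∈ Set.Icc 0 α → t ∈ Set.Icc 0 α →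
      c * (|θ - t| + ‖ξ - η‖ * Real.sqrt (θ * t)) ≤
        Real.arccos ⟪Real.sin θ • ξ + Real.cos θ • e, Real.sin t • η + Real.cos t • e⟫ ∧
      Real.arccos ⟪Real.sin θ • ξ + Real.cos θ • e, Real.sin t • η + Real.cos t • e⟫ ≤
        C * (|θ - t| + ‖ξ - η‖ * Real.sqrt (θ * t)) := by
  have hπ := Real.pi_pos
  have hπ3 := Real.pi_gt_three
  refine ⟨1 / Real.pi, Real.pi / 2, by positivity, by positivity, ?_⟩
  intro d e ξ η α θ t he hξ hη hξe hηe hα hα2 hθ ht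
  obtain ⟨hθ0, hθα⟩ := hθ
  obtain ⟨ht0, htα⟩ := ht
  have hθ2 : θ ≤ 1 / 2 := hθα.trans hα2
  have ht2 : t ≤ 1 / 2 := htα.trans hα2
  set p : ℝ := ⟪ξ, η⟫ with hp
  -- inner product computation
  have hv : ⟪Real.sin θ • ξ + Real.cos θ • e, Real.sin t • η + Real.cos t • e⟫
      = Real.sin θ * Real.sin t * p + Real.cos θ * Real.cos t := by
    have hee : ⟪e, e⟫ = (1 : ℝ) := by
      rw [real_inner_self_eq_norm_sq, he]; norm_num
    have heη : ⟪e, η⟫ = (0 : ℝ) := by rw [real_inner_comm]; exact hηe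
    simp only [inner_add_left, inner_add_right, real_inner_smul_left, real_inner_smul_right,
      hξe, heη, hee, hp, mul_zero, mul_one, add_zero, zero_add]
    ring
  rw [hv]
  have hpabs : |p| ≤ 1 := by
    have := abs_real_inner_le_norm ξ η
    rwa [hξ, hη, one_mul] at this
  obtain ⟨hp1, hp2⟩ := abs_le.1 hpabs
  have hnsq : ‖ξ - η‖ ^ 2 = 2 - 2 * p := by
    rw [@norm_sub_sq_real, hξ, hη]; ring
  have hsθ : 0 ≤ Real.sin θ := Real.sin_nonneg_of_nonneg_of_le_pi hθ0 (by linarith)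
  have hst : 0 ≤ Real.sin t := Real.sin_nonneg_of_nonneg_of_le_pi ht0 (by linarith)
  have hsθle : Real.sin θ ≤ θ := Real.sin_le hθ0
  have hstle : Real.sin t ≤ t := Real.sin_le ht0
  have hsθge : 2 / Real.pi * θ ≤ Real.sin θ := Real.mul_le_sin hθ0 (by linarith)
  have hstge : 2 / Real.pi * t ≤ Real.sin t := Real.mul_le_sin ht0 (by linarith)
  have hss0 : 0 ≤ Real.sin θ * Real.sin t := mul_nonneg hsθ hst
  set v : ℝ := Real.sin θ * Real.sin t * p + Real.cos θ * Real.cos t with hvdef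
  have hple : Real.sin θ * Real.sin t * p ≤ Real.sin θ * Real.sin t :=
    (mul_le_mul_of_nonneg_left hp2 hss0).trans_eq (mul_one _)
  have hpge : -(Real.sin θ * Real.sin t) ≤ Real.sin θ * Real.sin t * p := by
    have := mul_le_mul_of_nonneg_left hp1 hss0
    simpa using this
  have hv1 : -1 ≤ v := by
    have h1 := Real.neg_one_le_cos (θ + t)
    have h2 := Real.cos_add θ t
    rw [hvdef]; linarith
  have hv2 : v ≤ 1 := by
    have h1 := Real.cos_le_one (θ - t)
    have h2 := Real.cos_sub θ t
    rw [hvdef]; linarith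
  set D : ℝ := Real.arccos v with hD
  have hcosD : Real.cos D = v := Real.cos_arccos hv1 hv2
  have hD0 : 0 ≤ D := Real.arccos_nonneg v
  have hDπ : D ≤ Real.pi := Real.arccos_le_pi v
  set S : ℝ := Real.sin (D / 2) with hS
  have hS0 : 0 ≤ S := Real.sin_nonneg_of_nonneg_of_le_pi (by linarith) (by linarith)
  -- key identity
  have hkey : S ^ 2 = Real.sin ((θ - t) / 2) ^ 2
      + Real.sin θ * Real.sin t * ‖ξ - η‖ ^ 2 / 4 := by
    rw [hS, half_sin_sq D, half_sin_sq (θ - t), hcosD, Real.cos_sub, hnsq, hvdef]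
    ring
  set A : ℝ := |θ - t| with hA
  set B : ℝ := ‖ξ - η‖ * Real.sqrt (θ * t) with hB
  have hA0 : 0 ≤ A := abs_nonneg _
  have hAle : A ≤ 1 / 2 := by rw [hA, abs_le]; constructor <;> linarith
  have hB0 : 0 ≤ B := mul_nonneg (norm_nonneg _) (Real.sqrt_nonneg _)
  have hsqrt : Real.sqrt (θ * t) ^ 2 = θ * t := Real.sq_sqrt (mul_nonneg hθ0 ht0)
  have hBsq : B ^ 2 = ‖ξ - η‖ ^ 2 * (θ * t) := by rw [hB, mul_pow, hsqrt]
  have hSle : S ≤ D / 2 := Real.sin_le (by linarith)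
  have hDleS : D ≤ Real.pi * S := by
    have h := Real.mul_le_sin (x := D / 2) (by linarith) (by linarith)
    rw [← hS] at h
    have h2 : D / Real.pi ≤ S := by
      calc D / Real.pi = 2 / Real.pi * (D / 2) := by ring
        _ ≤ S := h
    rw [div_le_iff₀ hπ] at h2
    linarith
  have hs1sq : Real.sin ((θ - t) / 2) ^ 2 ≤ (A / 2) ^ 2 := by
    have h := Real.abs_sin_le_abs (x := (θ - t) / 2)
    have h2 : |(θ - t) / 2| = A / 2 := by rw [abs_div, hA]; norm_num
    rw [h2] at h
    rw [← sq_abs]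
    exact pow_le_pow_left₀ (abs_nonneg _) h 2
  have hq0 : 0 ≤ Real.sin θ * Real.sin t * ‖ξ - η‖ ^ 2 / 4 := by positivity
  constructor
  · -- lower bound
    have habs : |Real.sin ((θ - t) / 2)| ≤ S := by
      apply le_of_sq_le_sq' (abs_nonneg _) hS0
      rw [sq_abs, hkey]; linarith
    have hSA : A / Real.pi ≤ S := by
      have hmono : 2 / Real.pi * (A / 2) ≤ Real.sin (A / 2) :=
        Real.mul_le_sin (by positivity) (by linarith)
      have hsinabs : Real.sin (A / 2) = |Real.sin ((θ - t) / 2)| := by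
        rw [hA]
        rcases le_total 0 (θ - t) with h | h
        · rw [abs_of_nonneg h, abs_of_nonneg (Real.sin_nonneg_of_nonneg_of_le_pi
            (by linarith) (by linarith))]
        · rw [abs_of_nonpos h, abs_of_nonpos]
          · rw [← Real.sin_neg]; ring_nf
          · have hh : 0 ≤ Real.sin (-((θ - t) / 2)) := Real.sin_nonneg_of_nonneg_of_le_pi
              (by linarith) (by linarith)
            rw [Real.sin_neg] at hh; linarith
      calc A / Real.pi = 2 / Real.pi * (A / 2) := by ring
        _ ≤ Real.sin (A / 2) := hmono
        _ = |Real.sin ((θ - t) / 2)| := hsinabs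
        _ ≤ S := habs
    have hSB : B / Real.pi ≤ S := by
      apply le_of_sq_le_sq' (by positivity) hS0
      have h1 : (2 / Real.pi * θ) * (2 / Real.pi * t) ≤ Real.sin θ * Real.sin t :=
        mul_le_mul hsθge hstge (by positivity) hsθ
      have h2 := mul_le_mul_of_nonneg_right h1 (sq_nonneg ‖ξ - η‖)
      have h3 : (B / Real.pi) ^ 2 = (2 / Real.pi * θ) * (2 / Real.pi * t) * ‖ξ - η‖ ^ 2 / 4 := by
        rw [div_pow, hBsq]; ring
      rw [hkey, h3]
      have h4 := sq_nonneg (Real.sin ((θ - t) / 2))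
      linarith
    rw [div_le_iff₀ hπ] at hSA hSB
    have h9 : A + B ≤ D * Real.pi := by
      have h10 := mul_le_mul_of_nonneg_right hSle hπ.le
      linarith
    calc 1 / Real.pi * (A + B) = (A + B) / Real.pi := by ring
      _ ≤ D * Real.pi / Real.pi := by gcongr
      _ = D := mul_div_cancel_right₀ D hπ.ne'
  · -- upper bound
    have h5 : Real.sin θ * Real.sin t ≤ θ * t := mul_le_mul hsθle hstle hst hθ0
    have h6 := mul_le_mul_of_nonneg_right h5 (sq_nonneg ‖ξ - η‖)
    have hSup : S ≤ (A + B) / 2 := by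
      apply le_of_sq_le_sq' hS0 (by positivity)
      have hexp : ((A + B) / 2) ^ 2 = (A / 2) ^ 2 + B ^ 2 / 4 + A * B / 2 := by ring
      have hab : 0 ≤ A * B := mul_nonneg hA0 hB0
      rw [hkey, hexp]
      have h7 : ‖ξ - η‖ ^ 2 * (θ * t) = B ^ 2 := hBsq.symm
      linarith
    have h8 := mul_le_mul_of_nonneg_left hSup hπ.le
    linarith
end

section
/- Let e ∈ S^d, α ∈ (0, 1/2], ε ∈ (0,1), and let ρ be the metric ρ(x,y) = (1/α)·√(d(x,y)² + α·(√(α-d(x,e)) - √(α-d(y,e)))²) on B(e,α). Then for all x, y in the smaller cap B(e, (1-ε)α), ρ(x,y) ≍ d(x,y)/α, with constants of equivalence independent of α (they may depend on ε). -/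
open RealInnerProductSpace

/-- The geodesic distance on the unit sphere of `EuclideanSpace ℝ (Fin (d+1))`. -/
noncomputable def geo {d : ℕ} (x y : EuclideanSpace ℝ (Fin (d+1))) : ℝ :=
  Real.arccos ⟪x, y⟫

/-- The boundary-adapted metric on the spherical cap B(e,α). -/
noncomputable def rhoCap {d : ℕ} (e : EuclideanSpace ℝ (Fin (d+1))) (α : ℝ)
    (x y : EuclideanSpace ℝ (Fin (d+1))) : ℝ :=
  (1/α) * Real.sqrt ((geo x y)^2 +
    α * (Real.sqrt (α - geo x e) - Real.sqrt (α - geo y e))^2)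

lemma arccos_anti {x y : ℝ} (h : x ≤ y) : Real.arccos y ≤ Real.arccos x := by
  unfold Real.arccos
  have := Real.monotone_arcsin h
  linarith

lemma geo_triangle {d : ℕ} (x y z : EuclideanSpace ℝ (Fin (d+1)))
    (hx : ‖x‖ = 1) (hy : ‖y‖ = 1) (hz : ‖z‖ = 1) :
    geo x z ≤ geo x y + geo y z := by
  unfold geo
  set p : ℝ := ⟪x, y⟫ with hp
  set q : ℝ := ⟪y, z⟫ with hq
  set r : ℝ := ⟪x, z⟫ with hr
  have hp1 : |p| ≤ 1 := by simpa [hx, hy] using abs_real_inner_le_norm x y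
  have hq1 : |q| ≤ 1 := by simpa [hy, hz] using abs_real_inner_le_norm y z
  have hr1 : |r| ≤ 1 := by simpa [hx, hz] using abs_real_inner_le_norm x z
  rcases le_or_gt Real.pi (Real.arccos p + Real.arccos q) with hcase | hcase
  · exact (Real.arccos_le_pi r).trans hcase
  · -- key inner product inequality
    set u := x - p • y with hu
    set v := z - q • y with hv
    have hyy : ⟪y, y⟫ = (1:ℝ) := by
      rw [real_inner_self_eq_norm_sq, hy]; norm_num
    have hxx : ⟪x, x⟫ = (1:ℝ) := by
      rw [real_inner_self_eq_norm_sq, hx]; norm_num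
    have hzz : ⟪z, z⟫ = (1:ℝ) := by
      rw [real_inner_self_eq_norm_sq, hz]; norm_num
    have huv : ⟪u, v⟫ = r - p * q := by
      simp only [hu, hv, inner_sub_left, inner_sub_right, real_inner_smul_left,
        real_inner_smul_right, hyy]
      rw [hp, hq, hr]
      ring
    have hun : ‖u‖ = Real.sqrt (1 - p^2) := by
      rw [← Real.sqrt_sq (norm_nonneg u), ← real_inner_self_eq_norm_sq]
      congr 1
      simp only [hu, inner_sub_left, inner_sub_right, real_inner_smul_left,
        real_inner_smul_right, hyy, hxx]
      rw [hp, real_inner_comm y x]; ring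
    have hvn : ‖v‖ = Real.sqrt (1 - q^2) := by
      rw [← Real.sqrt_sq (norm_nonneg v), ← real_inner_self_eq_norm_sq]
      congr 1
      simp only [hv, inner_sub_left, inner_sub_right, real_inner_smul_left,
        real_inner_smul_right, hyy, hzz]
      rw [hq, real_inner_comm y z]; ring
    have hcs : -(‖u‖ * ‖v‖) ≤ ⟪u, v⟫ := neg_le_of_abs_le (abs_real_inner_le_norm u v)
    have key : Real.cos (Real.arccos p + Real.arccos q) ≤ r := by
      rw [Real.cos_add, Real.cos_arccos (abs_le.1 hp1).1 (abs_le.1 hp1).2,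
        Real.cos_arccos (abs_le.1 hq1).1 (abs_le.1 hq1).2,
        Real.sin_arccos, Real.sin_arccos]
      rw [huv, hun, hvn] at hcs
      linarith
    calc Real.arccos r ≤ Real.arccos (Real.cos (Real.arccos p + Real.arccos q)) :=
          arccos_anti key
      _ = Real.arccos p + Real.arccos q := Real.arccos_cos
          (add_nonneg (Real.arccos_nonneg _) (Real.arccos_nonneg _)) hcase.le

/-- On the smaller cap B(e,(1−ε)α), the metric ρ is equivalent to d(x,y)/α,
with constants depending only on ε (independent of α, d, x, y). -/
theorem stmt_9 :
    ∀ ε : ℝ, 0 < ε → ε < 1 →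
    ∃ c C : ℝ, 0 < c ∧ 0 < C ∧
    ∀ (d : ℕ) (e x y : EuclideanSpace ℝ (Fin (d+1))) (α : ℝ),
      ‖e‖ = 1 → 0 < α → α ≤ 1/2 →
      ‖x‖ = 1 → ‖y‖ = 1 → geo x e ≤ (1-ε)*α → geo y e ≤ (1-ε)*α →
      c * (geo x y / α) ≤ rhoCap e α x y ∧ rhoCap e α x y ≤ C * (geo x y / α) := by
  intro ε hε hε1
  refine ⟨1, Real.sqrt (1 + 1/(4*ε)), one_pos, Real.sqrt_pos.2 (by positivity), ?_⟩
  intro d e x y α he hα hα2 hx hy hxe hye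
  have hg0 : 0 ≤ geo x y := Real.arccos_nonneg _
  have tri1 : geo x e ≤ geo x y + geo y e := geo_triangle x y e hx hy he
  have tri2 : geo y e ≤ geo x y + geo x e := by
    have := geo_triangle y x e hy hx he
    have hcomm : geo y x = geo x y := by unfold geo; rw [real_inner_comm]
    rwa [hcomm] at this
  set a := geo x e with ha
  set b := geo y e with hb
  set g := geo x y with hg
  have ha0 : 0 ≤ a := Real.arccos_nonneg _
  have hb0 : 0 ≤ b := Real.arccos_nonneg _
  have h1 : ε * α ≤ α - a := by nlinarith
  have h2 : ε * α ≤ α - b := by nlinarith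
  have hεα : (0:ℝ) < ε * α := by positivity
  set s1 := Real.sqrt (α - a) with hs1d
  set s2 := Real.sqrt (α - b) with hs2d
  have hs1 : Real.sqrt (ε*α) ≤ s1 := Real.sqrt_le_sqrt h1
  have hs2 : Real.sqrt (ε*α) ≤ s2 := Real.sqrt_le_sqrt h2
  have hsum : 4*(ε*α) ≤ (s1+s2)^2 := by
    have h : 2*Real.sqrt (ε*α) ≤ s1+s2 := by linarith
    calc 4*(ε*α) = (2*Real.sqrt (ε*α))^2 := by
          rw [mul_pow, Real.sq_sqrt hεα.le]; ring
      _ ≤ (s1+s2)^2 := pow_le_pow_left₀ (by positivity) h 2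
  have hdiff : (s1 - s2)*(s1+s2) = b - a := by
    have e1 : s1^2 = α - a := Real.sq_sqrt (by linarith)
    have e2 : s2^2 = α - b := Real.sq_sqrt (by linarith)
    linear_combination e1 - e2
  have hT : (s1-s2)^2 * (4*(ε*α)) ≤ (b-a)^2 := by
    calc (s1-s2)^2 * (4*(ε*α)) ≤ (s1-s2)^2 * (s1+s2)^2 :=
          mul_le_mul_of_nonneg_left hsum (sq_nonneg _)
      _ = (b-a)^2 := by rw [← mul_pow, hdiff]
  have hba : (b-a)^2 ≤ g^2 := sq_le_sq' (by linarith) (by linarith)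
  have hTg : α * (s1-s2)^2 ≤ g^2 / (4*ε) := by
    rw [le_div_iff₀ (by positivity)]
    nlinarith [sq_nonneg (s1 - s2)]
  have hS0 : 0 ≤ α * (s1-s2)^2 := by positivity
  have hrho : rhoCap e α x y = (1/α) * Real.sqrt (g^2 + α*(s1-s2)^2) := rfl
  constructor
  · rw [hrho, one_mul]
    have h3 : g ≤ Real.sqrt (g^2 + α*(s1-s2)^2) := by
      have := Real.sqrt_le_sqrt (le_add_of_nonneg_right hS0 : g^2 ≤ g^2 + α*(s1-s2)^2)
      rwa [Real.sqrt_sq hg0] at this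
    rw [div_eq_inv_mul, ← one_div]
    exact mul_le_mul_of_nonneg_left h3 (by positivity)
  · rw [hrho]
    have h4 : Real.sqrt (g^2 + α*(s1-s2)^2) ≤ Real.sqrt (1 + 1/(4*ε)) * g := by
      have hle : g^2 + α*(s1-s2)^2 ≤ (1 + 1/(4*ε)) * g^2 := by
        have : (1 + 1/(4*ε)) * g^2 = g^2 + g^2/(4*ε) := by field_simp
        linarith
      calc Real.sqrt (g^2 + α*(s1-s2)^2) ≤ Real.sqrt ((1 + 1/(4*ε)) * g^2) :=
            Real.sqrt_le_sqrt hle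
        _ = Real.sqrt (1 + 1/(4*ε)) * g := by
            rw [Real.sqrt_mul (by positivity), Real.sqrt_sq hg0]
    calc (1/α) * Real.sqrt (g^2 + α*(s1-s2)^2) ≤ (1/α) * (Real.sqrt (1 + 1/(4*ε)) * g) :=
          mul_le_mul_of_nonneg_left h4 (by positivity)
      _ = Real.sqrt (1 + 1/(4*ε)) * (g / α) := by ring
end

section
/- Let e ∈ S^d, α ∈ (0, 1/2], r ∈ (0,1), β ≥ 1, and let Λ ⊂ B(e,α) be (r,ρ)-separable (ρ(ω,ω') ≥ r for distinct ω, ω' ∈ Λ) with respect to the metric ρ(x,y) = (1/α)·√(d(x,y)² + α·(√(α-d(x,e)) - √(α-d(y,e)))²). Then max over x ∈ B(e,α) of #{ω ∈ Λ : ρ(ω,x) ≤ βr} is at most C·β^{d+2}, where C depends only on d. -/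
open RealInnerProductSpace

open MeasureTheory Metric Module Real
open scoped ENNReal

/-!
Lift the cap to `ℝ^{d+1} × ℝ` (Euclidean norm) by `x ↦ (x, √α·√(α - d(x,e)))`. Chord and
geodesic distance on the sphere agree up to the factor `π/2`, so the Euclidean distance of the
lifts lies between `(2/π)·α·ρ` and `α·ρ`. Hence the points of `Λ` in a `ρ`-ball of radius `βr`
lift to a `2αr/π`-separated set in a Euclidean ball of radius `αβr` in dimension `d + 2`, and
comparing volumes bounds their number by `(1 + πβ)^{d+2} ≤ (5β)^{d+2}`.
-/

lemma card_le_of_dist_le_of_separated {ι E : Type*} [NormedAddCommGroup E] [NormedSpace ℝ E]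
    [FiniteDimensional ℝ E] (s : Finset ι) (f : ι → E) (c : E) {R δ : ℝ} (hR : 0 ≤ R)
    (hδ : 0 < δ) (hdist : ∀ i ∈ s, dist (f i) c ≤ R)
    (hsep : ∀ i ∈ s, ∀ j ∈ s, i ≠ j → δ ≤ dist (f i) (f j)) :
    (s.card : ℝ) ≤ (1 + 2 * R / δ) ^ finrank ℝ E := by
  borelize E
  let μ : Measure E := Measure.addHaar
  have hdisj : Set.PairwiseDisjoint (s : Set ι) fun i => ball (f i) (δ / 2) :=
    fun i hi j hj hij => ball_disjoint_ball (by linarith [hsep i hi j hj hij])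
  have hsub : (⋃ i ∈ s, ball (f i) (δ / 2)) ⊆ ball c (R + δ / 2) :=
    Set.iUnion₂_subset fun i hi => ball_subset_ball' (by linarith [hdist i hi])
  have hvol : (s.card : ℝ≥0∞) * ENNReal.ofReal ((δ / 2) ^ finrank ℝ E) * μ (ball 0 1) ≤
      ENNReal.ofReal ((R + δ / 2) ^ finrank ℝ E) * μ (ball 0 1) := by
    calc (s.card : ℝ≥0∞) * ENNReal.ofReal ((δ / 2) ^ finrank ℝ E) * μ (ball 0 1)
        = μ (⋃ i ∈ s, ball (f i) (δ / 2)) := by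
          rw [measure_biUnion_finset hdisj fun i _ => measurableSet_ball]
          simp only [μ.addHaar_ball_of_pos _ (half_pos hδ), Finset.sum_const, nsmul_eq_mul,
            mul_assoc]
      _ ≤ μ (ball c (R + δ / 2)) := measure_mono hsub
      _ = ENNReal.ofReal ((R + δ / 2) ^ finrank ℝ E) * μ (ball 0 1) :=
          μ.addHaar_ball_of_pos _ (by positivity)
  have hcard := (ENNReal.mul_le_mul_iff_left (measure_ball_pos μ _ one_pos).ne'
    measure_ball_lt_top.ne).1 hvol
  rw [← ENNReal.ofReal_natCast, ← ENNReal.ofReal_mul (by positivity),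
    ENNReal.ofReal_le_ofReal_iff (by positivity), ← le_div_iff₀ (by positivity), ← div_pow] at hcard
  rwa [show (R + δ / 2) / (δ / 2) = 1 + 2 * R / δ by field_simp; ring] at hcard

section Sphere

variable {d : ℕ} {x y : EuclideanSpace ℝ (Fin (d+1))}

lemma geo_nonneg (x y : EuclideanSpace ℝ (Fin (d+1))) : 0 ≤ geo x y :=
  arccos_nonneg _

lemma geo_le_pi (x y : EuclideanSpace ℝ (Fin (d+1))) : geo x y ≤ π :=
  arccos_le_pi _

lemma dist_eq_two_mul_sin_half_geo (hx : ‖x‖ = 1) (hy : ‖y‖ = 1) :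
    dist x y = 2 * sin (geo x y / 2) := by
  have hinner : |⟪x, y⟫| ≤ 1 := by simpa [hx, hy] using abs_real_inner_le_norm x y
  have hcos : cos (geo x y) = ⟪x, y⟫ := cos_arccos (neg_le_of_abs_le hinner) (le_of_abs_le hinner)
  have hsin : 0 ≤ sin (geo x y / 2) :=
    sin_nonneg_of_nonneg_of_le_pi (by linarith [geo_nonneg x y])
      (by linarith [geo_le_pi x y, pi_pos])
  rw [← sq_eq_sq₀ dist_nonneg (by positivity), dist_eq_norm, norm_sub_sq_real, hx, hy, ← hcos]
  have hdouble : cos (geo x y) = cos (2 * (geo x y / 2)) := by ring_nf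
  rw [hdouble, cos_two_mul, cos_sq']
  ring

lemma dist_le_geo (hx : ‖x‖ = 1) (hy : ‖y‖ = 1) : dist x y ≤ geo x y := by
  rw [dist_eq_two_mul_sin_half_geo hx hy]
  linarith [sin_le (x := geo x y / 2) (by linarith [geo_nonneg x y])]

lemma geo_le_pi_div_two_mul_dist (hx : ‖x‖ = 1) (hy : ‖y‖ = 1) :
    geo x y ≤ π / 2 * dist x y := by
  have hjordan := mul_le_sin (x := geo x y / 2) (by linarith [geo_nonneg x y])
    (by linarith [geo_le_pi x y])
  rw [dist_eq_two_mul_sin_half_geo hx hy]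
  field_simp at hjordan ⊢
  nlinarith [pi_pos]

end Sphere

section Lift

variable {d : ℕ} (e : EuclideanSpace ℝ (Fin (d+1))) {α : ℝ}

noncomputable def capLift (α : ℝ) (x : EuclideanSpace ℝ (Fin (d+1))) :
    WithLp 2 (EuclideanSpace ℝ (Fin (d+1)) × ℝ) :=
  WithLp.toLp 2 (x, √α * √(α - geo x e))

lemma dist_capLift (hα : 0 ≤ α) (x y : EuclideanSpace ℝ (Fin (d+1))) :
    dist (capLift e α x) (capLift e α y) =
      √(dist x y ^ 2 + α * (√(α - geo x e) - √(α - geo y e)) ^ 2) := by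
  rw [capLift, capLift, WithLp.prod_dist_eq_of_L2, WithLp.toLp_fst, WithLp.toLp_fst,
    WithLp.toLp_snd, WithLp.toLp_snd, Real.dist_eq, sq_abs, ← mul_sub, mul_pow, sq_sqrt hα]

lemma mul_rhoCap (hα : α ≠ 0) (x y : EuclideanSpace ℝ (Fin (d+1))) :
    α * rhoCap e α x y = √(geo x y ^ 2 + α * (√(α - geo x e) - √(α - geo y e)) ^ 2) := by
  rw [rhoCap, ← mul_assoc, mul_one_div_cancel hα, one_mul]

variable {x y : EuclideanSpace ℝ (Fin (d+1))}

lemma dist_capLift_le_mul_rhoCap (hα : 0 < α) (hx : ‖x‖ = 1) (hy : ‖y‖ = 1) :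
    dist (capLift e α x) (capLift e α y) ≤ α * rhoCap e α x y := by
  rw [dist_capLift e hα.le, mul_rhoCap e hα.ne']
  gcongr
  exact dist_le_geo hx hy

lemma mul_rhoCap_le_pi_div_two_mul_dist_capLift (hα : 0 < α) (hx : ‖x‖ = 1) (hy : ‖y‖ = 1) :
    α * rhoCap e α x y ≤ π / 2 * dist (capLift e α x) (capLift e α y) := by
  rw [dist_capLift e hα.le, mul_rhoCap e hα.ne', ← sqrt_sq (by positivity : 0 ≤ π / 2),
    ← sqrt_mul (by positivity)]
  gcongr
  have hgeo := geo_le_pi_div_two_mul_dist hx hy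
  have hπ : 1 ≤ (π / 2) ^ 2 := by nlinarith [pi_gt_three]
  nlinarith [geo_nonneg x y, mul_nonneg hα.le (sq_nonneg (√(α - geo x e) - √(α - geo y e)))]

end Lift

theorem stmt_12_general (d : ℕ) :
    ∃ C : ℝ, 0 < C ∧
    ∀ (e : EuclideanSpace ℝ (Fin (d+1))) (α r β : ℝ)
      (Λ : Finset (EuclideanSpace ℝ (Fin (d+1)))),
      ‖e‖ = 1 → 0 < α → α ≤ 1/2 → 0 < r → r < 1 → 1 ≤ β →
      (∀ ω ∈ Λ, ‖ω‖ = 1 ∧ geo ω e ≤ α) →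
      (∀ ω ∈ Λ, ∀ ω' ∈ Λ, ω ≠ ω' → r ≤ rhoCap e α ω ω') →
      ∀ x : EuclideanSpace ℝ (Fin (d+1)), ‖x‖ = 1 → geo x e ≤ α →
        ((Λ.filter (fun ω => rhoCap e α ω x ≤ β * r)).card : ℝ) ≤ C * β^(d+2) := by
  refine ⟨5 ^ (d + 2), by positivity, ?_⟩
  intro e α r β Λ _ hα _ hr _ hβ hΛ hsep x hx _
  have hcard := card_le_of_dist_le_of_separated (Λ.filter fun ω => rhoCap e α ω x ≤ β * r)
    (capLift e α) (capLift e α x) (R := α * (β * r)) (δ := 2 / π * (α * r)) (by positivity)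
    (by positivity) ?_ ?_
  · have hdim : finrank ℝ (WithLp 2 (EuclideanSpace ℝ (Fin (d+1)) × ℝ)) = d + 2 := by
      simp [(WithLp.linearEquiv 2 ℝ _).finrank_eq]
    calc _ ≤ (1 + π * β) ^ (d + 2) := by
          convert hcard using 2
          · field_simp
          · exact hdim.symm
      _ ≤ (5 * β) ^ (d + 2) := by gcongr; nlinarith [pi_le_four]
      _ = 5 ^ (d + 2) * β ^ (d + 2) := mul_pow _ _ _
  · intro ω hω
    obtain ⟨hωΛ, hωx⟩ := Finset.mem_filter.1 hω
    calc _ ≤ α * rhoCap e α ω x := dist_capLift_le_mul_rhoCap e hα (hΛ ω hωΛ).1 hx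
      _ ≤ α * (β * r) := by gcongr
  · intro ω hω ω' hω' hne
    have hωΛ := (Finset.mem_filter.1 hω).1
    have hω'Λ := (Finset.mem_filter.1 hω').1
    have hlift := mul_rhoCap_le_pi_div_two_mul_dist_capLift e hα (hΛ ω hωΛ).1 (hΛ ω' hω'Λ).1
    have hρ := mul_le_mul_of_nonneg_left (hsep ω hωΛ ω' hω'Λ hne) hα.le
    rw [div_mul_eq_mul_div, div_le_iff₀ pi_pos]
    linarith

/-- Bounded overlap: an (r,ρ)-separable subset of the cap B(e,α) has at most
C·β^{d+2} points in any ρ-ball of radius βr, with C depending only on d. -/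
theorem stmt_12 (d : ℕ) (hd : 1 ≤ d) :
    ∃ C : ℝ, 0 < C ∧
    ∀ (e : EuclideanSpace ℝ (Fin (d+1))) (α r β : ℝ)
      (Λ : Finset (EuclideanSpace ℝ (Fin (d+1)))),
      ‖e‖ = 1 → 0 < α → α ≤ 1/2 → 0 < r → r < 1 → 1 ≤ β →
      (∀ ω ∈ Λ, ‖ω‖ = 1 ∧ geo ω e ≤ α) →
      (∀ ω ∈ Λ, ∀ ω' ∈ Λ, ω ≠ ω' → r ≤ rhoCap e α ω ω') →
      ∀ x : EuclideanSpace ℝ (Fin (d+1)), ‖x‖ = 1 → geo x e ≤ α →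
        ((Λ.filter (fun ω => rhoCap e α ω x ≤ β * r)).card : ℝ) ≤ C * β^(d+2) :=
  stmt_12_general d
end

section
/- Let α ∈ (0,1/2] and define g(t) = arcsin((sin α)·cos t) for t ∈ [0,π]. Let x ∈ [0,α], let t_x ∈ [0,π/2] be the unique solution of g(t) = x, and let r ∈ (0,1). Then the set {g(t) : t ∈ [0,π], |t − t_x| ≤ r} has Lebesgue measure comparable to α·r·(t_x + r), with absolute constants of equivalence independent of α, x, r. -/
open MeasureTheory

set_option maxHeartbeats 1000000

/-- Ball-volume computation for the parameter metric: the image under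
g(t) = arcsin((sin α)·cos t) of {t ∈ [0,π] : |t − t_x| ≤ r} has Lebesgue measure
comparable to α·r·(t_x + r), with absolute constants independent of α, x, r. -/
theorem stmt_18 :
    ∃ c C : ℝ, 0 < c ∧ 0 < C ∧ ∀ (α x tx r : ℝ), 0 < α → α ≤ 1/2 →
      x ∈ Set.Icc (0:ℝ) α → tx ∈ Set.Icc (0:ℝ) (Real.pi/2) →
      Real.arcsin (Real.sin α * Real.cos tx) = x → 0 < r → r < 1 →
      c * (α * r * (tx + r)) ≤
        (volume ((fun t => Real.arcsin (Real.sin α * Real.cos t)) ''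
          {t | t ∈ Set.Icc (0:ℝ) Real.pi ∧ |t - tx| ≤ r})).toReal ∧
      (volume ((fun t => Real.arcsin (Real.sin α * Real.cos t)) ''
          {t | t ∈ Set.Icc (0:ℝ) Real.pi ∧ |t - tx| ≤ r})).toReal
        ≤ C * (α * r * (tx + r)) := by
  have hpi3 : (3:ℝ) < Real.pi := Real.pi_gt_three
  have hpi4 : Real.pi < 4 := Real.pi_lt_d2.trans (by norm_num)
  have hcoshalf : 0 < Real.cos (1/2) := Real.cos_pos_of_mem_Ioo
    (by constructor <;> [linarith; linarith])
  refine ⟨4/Real.pi^3, Real.pi / Real.cos (1/2), by positivity, by positivity, ?_⟩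
  intro α x tx r hα hα2 _hx htx _hgx hr hr1
  obtain ⟨htx0, htxpi⟩ := htx
  set f : ℝ → ℝ := fun t => Real.arcsin (Real.sin α * Real.cos t) with hf
  set a : ℝ := max 0 (tx - r) with ha
  set b : ℝ := tx + r with hb
  have ha0 : 0 ≤ a := le_max_left _ _
  have ha_tx : a ≤ tx := max_le htx0 (by linarith)
  have ha_ge : tx - r ≤ a := le_max_right _ _
  have hab : a ≤ b := by simp only [hb]; linarith
  have hbpi : b ≤ Real.pi := by simp only [hb]; linarith
  -- the parameter set is an interval
  have hset : {t | t ∈ Set.Icc (0:ℝ) Real.pi ∧ |t - tx| ≤ r} = Set.Icc a b := by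
    ext t
    simp only [Set.mem_setOf_eq, Set.mem_Icc, abs_le, ha, hb, max_le_iff]
    constructor
    · rintro ⟨⟨h1, _⟩, h3, h4⟩
      exact ⟨⟨h1, by linarith⟩, by linarith⟩
    · rintro ⟨⟨h1, h2⟩, h3⟩
      exact ⟨⟨h1, by linarith⟩, by linarith, by linarith⟩
  -- monotonicity of f on [0, π]
  have hsa0 : 0 < Real.sin α := Real.sin_pos_of_pos_of_lt_pi hα (by linarith)
  have hsa1 : Real.sin α ≤ 1 := Real.sin_le_one α
  have hmono : ∀ s t : ℝ, 0 ≤ s → s ≤ t → t ≤ Real.pi → f t ≤ f s := by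
    intro s t hs hst ht
    exact Real.monotone_arcsin (by
      have := Real.cos_le_cos_of_nonneg_of_le_pi hs ht hst
      nlinarith)
  have hcont : Continuous f := Real.continuous_arcsin.comp (continuous_const.mul Real.continuous_cos)
  have himg : f '' Set.Icc a b = Set.Icc (f b) (f a) := by
    apply Set.Subset.antisymm
    · rintro _ ⟨t, ⟨hta, htb⟩, rfl⟩
      exact ⟨hmono t b (by linarith) htb (by linarith),
             hmono a t ha0 hta (by linarith)⟩
    · exact intermediate_value_Icc' hab hcont.continuousOn
  have hfle : f b ≤ f a := hmono a b ha0 hab hbpi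
  have hvol : (volume ((fun t => Real.arcsin (Real.sin α * Real.cos t)) ''
      {t | t ∈ Set.Icc (0:ℝ) Real.pi ∧ |t - tx| ≤ r})).toReal = f a - f b := by
    rw [hset]
    show (volume (f '' Set.Icc a b)).toReal = f a - f b
    rw [himg, Real.volume_Icc, ENNReal.toReal_ofReal (by linarith)]
  rw [hvol]
  -- basic bounds on arcsin values
  have hbnd : ∀ t : ℝ, -1 ≤ Real.sin α * Real.cos t ∧ Real.sin α * Real.cos t ≤ 1 := by
    intro t
    constructor <;> nlinarith [Real.neg_one_le_cos t, Real.cos_le_one t]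
  have hsinfa : Real.sin (f a) = Real.sin α * Real.cos a :=
    Real.sin_arcsin (hbnd a).1 (hbnd a).2
  have hsinfb : Real.sin (f b) = Real.sin α * Real.cos b :=
    Real.sin_arcsin (hbnd b).1 (hbnd b).2
  have harcsin_sa : Real.arcsin (Real.sin α) = α := Real.arcsin_sin (by linarith) (by linarith)
  have harcsin_nsa : Real.arcsin (-Real.sin α) = -α := by
    rw [← Real.sin_neg]; exact Real.arcsin_sin (by linarith) (by linarith)
  have habs : ∀ t : ℝ, -α ≤ f t ∧ f t ≤ α := by
    intro t
    constructor
    · rw [← harcsin_nsa]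
      exact Real.monotone_arcsin (by nlinarith [Real.neg_one_le_cos t])
    · rw [← harcsin_sa]
      exact Real.monotone_arcsin (by nlinarith [Real.cos_le_one t])
  have hA1 := habs a; have hB1 := habs b
  set D : ℝ := f a - f b with hD
  have hD0 : 0 ≤ D := by linarith
  have hD1 : D ≤ 1 := by simp only [hD]; linarith
  -- sin difference identity
  have hsinsub : Real.sin α * Real.cos a - Real.sin α * Real.cos b
      = 2 * Real.sin (D / 2) * Real.cos ((f a + f b) / 2) := by
    rw [← hsinfa, ← hsinfb, Real.sin_sub_sin]
  -- bounds on the midpoint cosine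
  have hmidcos_le : Real.cos ((f a + f b) / 2) ≤ 1 := Real.cos_le_one _
  have hmidcos_ge : Real.cos (1/2) ≤ Real.cos ((f a + f b) / 2) := by
    rw [← Real.cos_abs ((f a + f b) / 2)]
    apply Real.cos_le_cos_of_nonneg_of_le_pi (abs_nonneg _) (by linarith)
    rw [abs_le]; constructor <;> [linarith [hA1.1, hB1.1]; linarith [hA1.2, hB1.2]]
  have hsinD_le : Real.sin (D / 2) ≤ D / 2 := Real.sin_le (by linarith)
  have hsinD_ge : 2 / Real.pi * (D / 2) ≤ Real.sin (D / 2) :=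
    Real.mul_le_sin (by linarith) (by linarith)
  have hsinD_nonneg : 0 ≤ Real.sin (D / 2) := by
    have := Real.sin_nonneg_of_nonneg_of_le_pi (x := D/2) (by linarith) (by linarith)
    exact this
  -- cos a - cos b via product formula
  have hcossub : Real.cos a - Real.cos b
      = 2 * Real.sin ((a + b) / 2) * Real.sin ((b - a) / 2) := by
    rw [Real.cos_sub_cos a b, show (a - b) / 2 = -((b - a)/2) by ring, Real.sin_neg]; ring
  -- bounds on the half-width sine:  r/2 ≤ (b-a)/2 ≤ r
  have hba_lo : r ≤ b - a := by simp only [hb]; linarith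
  have hba_hi : b - a ≤ 2 * r := by simp only [hb]; linarith
  have hw_le : Real.sin ((b - a) / 2) ≤ r := by
    calc Real.sin ((b - a) / 2) ≤ (b - a) / 2 := Real.sin_le (by linarith)
    _ ≤ r := by linarith
  have hw_ge : 2 / Real.pi * (r / 2) ≤ Real.sin ((b - a) / 2) := by
    calc 2 / Real.pi * (r / 2) ≤ 2 / Real.pi * ((b - a) / 2) := by
          apply mul_le_mul_of_nonneg_left (by linarith) (by positivity)
    _ ≤ Real.sin ((b - a) / 2) := Real.mul_le_sin (by linarith) (by linarith)
  have hw_nonneg : 0 ≤ Real.sin ((b - a) / 2) :=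
    Real.sin_nonneg_of_nonneg_of_le_pi (by linarith) (by linarith)
  -- bounds on the midpoint sine: (tx+r)/2 ≤ (a+b)/2 ≤ tx+r, and (a+b)/2 ≤ π/2
  have hm_lo : (tx + r) / 2 ≤ (a + b) / 2 := by simp only [hb]; linarith
  have hm_hi : (a + b) / 2 ≤ tx + r := by simp only [hb]; linarith
  have hm_half : (a + b) / 2 ≤ Real.pi / 2 := by
    rcases le_total tx r with h | h
    · have : a = 0 := max_eq_left (by linarith)
      rw [this]; simp only [hb]; linarith
    · have : a = tx - r := max_eq_right (by linarith)
      rw [this]; simp only [hb]; linarith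
  have hm_le : Real.sin ((a + b) / 2) ≤ tx + r := by
    calc Real.sin ((a + b) / 2) ≤ (a + b) / 2 := Real.sin_le (by positivity)
    _ ≤ tx + r := hm_hi
  have hm_ge : 2 / Real.pi * ((tx + r) / 2) ≤ Real.sin ((a + b) / 2) := by
    calc 2 / Real.pi * ((tx + r) / 2) ≤ 2 / Real.pi * ((a + b) / 2) := by
          apply mul_le_mul_of_nonneg_left hm_lo (by positivity)
    _ ≤ Real.sin ((a + b) / 2) := Real.mul_le_sin (by positivity) hm_half
  have hm_nonneg : 0 ≤ Real.sin ((a + b) / 2) :=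
    Real.sin_nonneg_of_nonneg_of_le_pi (by positivity) (by linarith)
  -- bounds on cos a - cos b
  have hcos_lo : 2 / Real.pi ^ 2 * (r * (tx + r)) ≤ Real.cos a - Real.cos b := by
    rw [hcossub]
    have h1 : r / Real.pi ≤ Real.sin ((b - a) / 2) := by
      have : 2 / Real.pi * (r / 2) = r / Real.pi := by ring
      linarith [hw_ge, this.symm.le]
    have h2 : (tx + r) / Real.pi ≤ Real.sin ((a + b) / 2) := by
      have : 2 / Real.pi * ((tx + r) / 2) = (tx + r) / Real.pi := by ring
      linarith [hm_ge, this.symm.le]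
    have h3 : r / Real.pi * ((tx + r) / Real.pi) ≤
        Real.sin ((b - a) / 2) * Real.sin ((a + b) / 2) := by
      apply mul_le_mul h1 h2 (by positivity) hw_nonneg
    calc 2 / Real.pi ^ 2 * (r * (tx + r)) = 2 * (r / Real.pi * ((tx + r) / Real.pi)) := by
          field_simp
      _ ≤ 2 * (Real.sin ((b - a) / 2) * Real.sin ((a + b) / 2)) := by linarith [h3]
      _ = 2 * Real.sin ((a + b) / 2) * Real.sin ((b - a) / 2) := by ring
  have hcos_hi : Real.cos a - Real.cos b ≤ 2 * (r * (tx + r)) := by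
    rw [hcossub]
    have h3 : Real.sin ((a + b) / 2) * Real.sin ((b - a) / 2) ≤ (tx + r) * r := by
      apply mul_le_mul hm_le hw_le hw_nonneg (by positivity)
    linarith [h3]
  -- bounds on sin α
  have hsa_lo : 2 / Real.pi * α ≤ Real.sin α := Real.mul_le_sin (by linarith) (by linarith)
  have hsa_hi : Real.sin α ≤ α := Real.sin_le (by linarith)
  -- combine
  have hcosdiff_nonneg : 0 ≤ Real.cos a - Real.cos b := by
    have h0 : (0:ℝ) ≤ 2 / Real.pi ^ 2 * (r * (tx + r)) := by positivity
    linarith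
  have hsdiff_lo : Real.sin α * (Real.cos a - Real.cos b) ≥
      (2 / Real.pi * α) * (2 / Real.pi ^ 2 * (r * (tx + r))) := by
    apply mul_le_mul hsa_lo hcos_lo (by positivity) (by linarith)
  have hsdiff_hi : Real.sin α * (Real.cos a - Real.cos b) ≤ α * (2 * (r * (tx + r))) := by
    apply mul_le_mul hsa_hi hcos_hi hcosdiff_nonneg (by linarith)
  -- D vs sin difference
  have hkey : Real.sin α * (Real.cos a - Real.cos b)
      = 2 * Real.sin (D / 2) * Real.cos ((f a + f b) / 2) := by
    rw [← hsinsub]; ring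
  constructor
  · -- lower bound: D ≥ sin α (cos a - cos b) ≥ 4/π³ α r (tx+r)
    have hDge : Real.sin α * (Real.cos a - Real.cos b) ≤ D := by
      rw [hkey]
      calc 2 * Real.sin (D / 2) * Real.cos ((f a + f b) / 2)
          ≤ 2 * Real.sin (D / 2) * 1 :=
            mul_le_mul_of_nonneg_left hmidcos_le (by linarith [hsinD_nonneg])
        _ ≤ D := by linarith [hsinD_le]
    have : (2 / Real.pi * α) * (2 / Real.pi ^ 2 * (r * (tx + r)))
        = 4 / Real.pi ^ 3 * (α * r * (tx + r)) := by
      field_simp; ring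
    linarith [hsdiff_lo, this.symm.le]
  · -- upper bound
    have hDle : 2 / Real.pi * Real.cos (1/2) * D ≤ Real.sin α * (Real.cos a - Real.cos b) := by
      rw [hkey]
      calc 2 / Real.pi * Real.cos (1/2) * D
          = (2 * (2 / Real.pi * (D / 2))) * Real.cos (1/2) := by ring
        _ ≤ (2 * Real.sin (D / 2)) * Real.cos ((f a + f b) / 2) := by
            apply mul_le_mul (by linarith [hsinD_ge]) hmidcos_ge (by linarith [hcoshalf])
              (by linarith [hsinD_nonneg])
        _ = 2 * Real.sin (D / 2) * Real.cos ((f a + f b) / 2) := by ring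
    have hc2 : (0:ℝ) < 2 / Real.pi * Real.cos (1/2) := by positivity
    have h2 : D ≤ Real.sin α * (Real.cos a - Real.cos b) / (2 / Real.pi * Real.cos (1/2)) :=
      (le_div_iff₀ hc2).mpr (by linarith [hDle])
    have h3 : Real.sin α * (Real.cos a - Real.cos b) / (2 / Real.pi * Real.cos (1/2))
        ≤ (α * (2 * (r * (tx + r)))) / (2 / Real.pi * Real.cos (1/2)) := by
      gcongr
    have h4 : (α * (2 * (r * (tx + r)))) / (2 / Real.pi * Real.cos (1/2))
        = Real.pi / Real.cos (1/2) * (α * r * (tx + r)) := by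
      field_simp
    linarith [h2, h3, h4.le]
end
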